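/- arXiv:2203.15731 — 3 statements merged into one kernel-verified Lean document; each statement's English description precedes it below -/
import Mathlib

section
/- If A and B are Borel subsets of ℝ^n with A + B = ℝ^n, then dim_H(A) + dim_P(B) ≥ n. -/
open Set Filter MeasureTheory Metric Bornology
open scoped ENNReal NNReal Topology Pointwise

noncomputable def covN {X : Type*} [PseudoMetricSpace X] (E : Set X) (δ : ℝ) : ℕ :=
  sInf {k : ℕ | ∃ S : Finset X, S.card = k ∧ E ⊆ ⋃ x ∈ S, Metric.ball x δ}

/-- Upper Minkowski (box) dimension. -/
noncomputable def ubDim {X : Type*} [PseudoMetricSpace X] (E : Set X) : ℝ≥0∞ :=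
  ENNReal.ofReal
    (Filter.limsup (fun δ : ℝ => Real.log (covN E δ) / Real.log (1 / δ)) (𝓝[>] (0:ℝ)))

/-- Packing dimension, via countable covers by bounded sets. -/
noncomputable def packDim {X : Type*} [PseudoMetricSpace X] (E : Set X) : ℝ≥0∞ :=
  ⨅ (F : ℕ → Set X) (_ : E ⊆ ⋃ i, F i) (_ : ∀ i, Bornology.IsBounded (F i)),
    ⨆ i, ubDim (F i)

lemma my_diam_add_le {X : Type*} [SeminormedAddCommGroup X] (s t : Set X) :
    EMetric.diam (s + t) ≤ EMetric.diam s + EMetric.diam t := by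
  apply EMetric.diam_le
  rintro p ⟨a, ha, b, hb, rfl⟩ q ⟨c, hc, d, hd, rfl⟩
  calc edist (a + b) (c + d) ≤ edist a c + edist b d := edist_add_add_le a b c d
    _ ≤ _ := add_le_add (EMetric.edist_le_diam_of_mem ha hc)
        (EMetric.edist_le_diam_of_mem hb hd)

lemma my_abs_coord_le_norm {n : ℕ} (x : EuclideanSpace ℝ (Fin n)) (i : Fin n) : |x i| ≤ ‖x‖ := by
  rw [EuclideanSpace.norm_eq]
  have h1 : |x i| = Real.sqrt (‖x i‖ ^ 2) := by
    rw [Real.sqrt_sq_eq_abs]; simp [abs_abs]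
  rw [h1]
  apply Real.sqrt_le_sqrt
  exact Finset.single_le_sum (f := fun j => ‖x j‖ ^ 2) (fun j _ => by positivity)
    (Finset.mem_univ i)

lemma grid_cover {n : ℕ} (hn : 0 < n) {R δ : ℝ} (hR : 0 < R) (hδ : 0 < δ) (hδ1 : δ ≤ 1) :
    ∃ S : Finset (EuclideanSpace ℝ (Fin n)),
      (Metric.closedBall (0 : EuclideanSpace ℝ (Fin n)) R ⊆ ⋃ x ∈ S, Metric.ball x δ) ∧
      (S.card : ℝ) ≤ ((4 * n * R + 5) / δ) ^ n := by
  classical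
  have hn' : (0:ℝ) < n := by exact_mod_cast hn
  set s : ℝ := δ / (2 * n) with hs
  have hs0 : 0 < s := div_pos hδ (by positivity)
  set m : ℕ := ⌈R / s⌉₊ with hm
  set G : Finset (Fin n → ℤ) := Finset.Icc (fun _ => -(m : ℤ) - 1) (fun _ => (m : ℤ) + 1) with hG
  set c : (Fin n → ℤ) → EuclideanSpace ℝ (Fin n) := fun g => WithLp.toLp 2 (fun i => (g i : ℝ) * s) with hc
  refine ⟨G.image c, ?_, ?_⟩
  · intro x hx
    have hxR : ∀ i, |x i| ≤ R := by
      intro i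
      refine (my_abs_coord_le_norm x i).trans ?_
      simpa [dist_zero_right] using (Metric.mem_closedBall.1 hx)
    set g : Fin n → ℤ := fun i => round (x i / s) with hg
    have hgi : ∀ i, |(g i : ℝ)| ≤ R / s + 1 / 2 := by
      intro i
      have h1 : |(g i : ℝ) - x i / s| ≤ 1 / 2 := by
        simpa [abs_sub_comm] using abs_sub_round (x i / s)
      have h2 : |x i / s| ≤ R / s := by
        rw [abs_div, abs_of_pos hs0]
        gcongr
        exact hxR i
      calc |(g i : ℝ)| ≤ |x i / s| + |(g i : ℝ) - x i / s| := by
            have := abs_add_le (x i / s) ((g i : ℝ) - x i / s); simpa using this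
        _ ≤ R / s + 1 / 2 := add_le_add h2 h1
    have key : ∀ i, -(m:ℤ) - 1 ≤ g i ∧ g i ≤ (m:ℤ) + 1 := by
      intro i
      have h2 := abs_le.1 (hgi i)
      have hm1 : R / s ≤ (m : ℝ) := Nat.le_ceil _
      constructor
      · have h3 : -(m:ℝ) - 1 ≤ (g i : ℝ) := by linarith [h2.1]
        exact_mod_cast h3
      · have h3 : (g i : ℝ) ≤ (m:ℝ) + 1 := by linarith [h2.2]
        exact_mod_cast h3
    have hgG : g ∈ G := by
      rw [hG, Finset.mem_Icc]
      exact ⟨fun i => (key i).1, fun i => (key i).2⟩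
    have hdist : dist x (c g) < δ := by
      have hcoord : ∀ i, dist (x i) ((c g) i) ≤ s / 2 := by
        intro i
        have hcgi : (c g) i = (g i : ℝ) * s := rfl
        rw [hcgi, Real.dist_eq]
        have heq : x i - (g i : ℝ) * s = (x i / s - (g i : ℝ)) * s := by
          field_simp
          try ring
        rw [heq, abs_mul, abs_of_pos hs0]
        have h4 := abs_sub_round (x i / s)
        calc |x i / s - (g i:ℝ)| * s ≤ (1/2) * s := by
              apply mul_le_mul_of_nonneg_right _ hs0.le
              simpa [hg] using h4
          _ = s / 2 := by ring
      have hd1 : dist x (c g) ≤ Real.sqrt (n * (s/2)^2) := by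
        rw [EuclideanSpace.dist_eq]
        apply Real.sqrt_le_sqrt
        calc ∑ i, dist (x i) ((c g) i) ^ 2 ≤ ∑ _i : Fin n, (s/2)^2 :=
              Finset.sum_le_sum fun i _ => by
                have h5 := hcoord i
                have h0 : (0:ℝ) ≤ dist (x i) ((c g) i) := dist_nonneg
                nlinarith
          _ = n * (s/2)^2 := by simp [Finset.sum_const, Finset.card_univ]
      refine hd1.trans_lt ?_
      have h1n : (1:ℝ) ≤ n := by exact_mod_cast hn
      have h1 : Real.sqrt (n * (s/2)^2) ≤ Real.sqrt ((n * (s/2))^2) := by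
        apply Real.sqrt_le_sqrt
        have hnn : (0:ℝ) ≤ (n - 1) * (s/2)^2 := mul_nonneg (by linarith) (sq_nonneg _)
        nlinarith [mul_nonneg hn'.le hnn]
      have h2 : Real.sqrt ((n * (s/2))^2) = n * (s/2) := by
        apply Real.sqrt_sq; positivity
      have h3 : (n:ℝ) * (s/2) = δ / 4 := by
        rw [hs]; field_simp; ring
      calc Real.sqrt (n * (s/2)^2) ≤ n * (s/2) := h1.trans_eq h2
        _ = δ / 4 := h3
        _ < δ := by linarith
    refine Set.mem_biUnion (Finset.mem_image_of_mem c hgG) ?_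
    exact Metric.mem_ball.2 hdist
  · have hcard : (G.image c).card ≤ G.card := Finset.card_image_le
    have hGcard : G.card = (2 * m + 3) ^ n := by
      rw [hG, Pi.card_Icc]
      have h8 : (Finset.Icc (-(m : ℤ) - 1) ((m : ℤ) + 1)).card = 2 * m + 3 := by
        rw [Int.card_Icc]; omega
      simp only [h8, Finset.prod_const, Finset.card_univ, Fintype.card_fin]
    have hb : (2 * (m:ℝ) + 3) ≤ (4 * n * R + 5) / δ := by
      have hm1 : (m:ℝ) < R / s + 1 := Nat.ceil_lt_add_one (by positivity)
      have hrs : R / s = 2 * (n * R / δ) := by rw [hs]; field_simp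
      rw [hrs] at hm1
      have h6 : (5:ℝ) ≤ 5 / δ := by rw [le_div_iff₀ hδ]; nlinarith
      have h7 : (4 * n * R + 5) / δ = 4 * (n * R / δ) + 5 / δ := by ring
      linarith
    calc ((G.image c).card : ℝ) ≤ (G.card : ℝ) := by exact_mod_cast hcard
      _ = ((2 * m + 3 : ℕ) : ℝ) ^ n := by rw [hGcard]; push_cast; ring
      _ ≤ ((4 * n * R + 5) / δ) ^ n := by
          apply pow_le_pow_left₀ (by positivity) ?_
          push_cast; linarith

lemma covN_le_of_subset_ball {n : ℕ} (hn : 0 < n) {E : Set (EuclideanSpace ℝ (Fin n))} {R δ : ℝ}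
    (hR : 0 < R) (hE : E ⊆ Metric.closedBall 0 R) (hδ : 0 < δ) (hδ1 : δ ≤ 1) :
    (covN E δ : ℝ) ≤ ((4 * n * R + 5) / δ) ^ n := by
  obtain ⟨S, hScov, hScard⟩ := grid_cover hn hR hδ hδ1
  have h1 : covN E δ ≤ S.card :=
    Nat.sInf_le ⟨S, rfl, hE.trans hScov⟩
  calc (covN E δ : ℝ) ≤ (S.card : ℝ) := by exact_mod_cast h1
    _ ≤ _ := hScard

lemma covN_exists_cover {n : ℕ} (hn : 0 < n) {E : Set (EuclideanSpace ℝ (Fin n))}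
    (hE : IsBounded E) {δ : ℝ} (hδ : 0 < δ) (hδ1 : δ ≤ 1) :
    ∃ S : Finset (EuclideanSpace ℝ (Fin n)), S.card = covN E δ ∧
      E ⊆ ⋃ x ∈ S, Metric.ball x δ := by
  obtain ⟨r, hr⟩ := hE.subset_closedBall 0
  have hsub : E ⊆ Metric.closedBall 0 (max r 1) :=
    hr.trans (Metric.closedBall_subset_closedBall (le_max_left _ _))
  obtain ⟨S, hScov, -⟩ := grid_cover hn (lt_of_lt_of_le one_pos (le_max_right r 1)) hδ hδ1
  have hne : {k : ℕ | ∃ S : Finset (EuclideanSpace ℝ (Fin n)),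
      S.card = k ∧ E ⊆ ⋃ x ∈ S, Metric.ball x δ}.Nonempty :=
    ⟨S.card, S, rfl, hsub.trans hScov⟩
  obtain ⟨S', hS'card, hS'cov⟩ := Nat.sInf_mem hne
  exact ⟨S', hS'card, hS'cov⟩

lemma covN_isBoundedUnder {n : ℕ} (hn : 0 < n) {E : Set (EuclideanSpace ℝ (Fin n))}
    (hE : IsBounded E) :
    IsBoundedUnder (· ≤ ·) (𝓝[>] (0:ℝ))
      (fun δ => Real.log (covN E δ) / Real.log (1 / δ)) := by
  obtain ⟨r, hr⟩ := hE.subset_closedBall 0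
  set R : ℝ := max r 1 with hR
  have hR0 : 0 < R := lt_of_lt_of_le one_pos (le_max_right r 1)
  have hsub : E ⊆ Metric.closedBall 0 R :=
    hr.trans (Metric.closedBall_subset_closedBall (le_max_left _ _))
  set C : ℝ := 4 * n * R + 5 with hC
  have hC1 : (1:ℝ) ≤ C := by
    have : (1:ℝ) ≤ n := by exact_mod_cast hn
    nlinarith [le_max_right r 1]
  have hlogC : 0 ≤ Real.log C := Real.log_nonneg hC1
  refine ⟨n * Real.log C / Real.log 2 + n, ?_⟩
  rw [Filter.eventually_map]
  filter_upwards [Ioo_mem_nhdsGT_of_mem (Set.left_mem_Ico.2 one_half_pos)] with δ hδ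
  obtain ⟨hδ0, hδh⟩ := hδ
  have hδ1 : δ ≤ 1 := by linarith
  have hL : Real.log 2 ≤ Real.log (1 / δ) := by
    apply Real.log_le_log (by norm_num)
    rw [le_div_iff₀ hδ0]; linarith
  have hL0 : 0 < Real.log (1 / δ) := lt_of_lt_of_le (Real.log_pos (by norm_num)) hL
  have hlog2 : (0:ℝ) < Real.log 2 := Real.log_pos (by norm_num)
  rcases Nat.eq_zero_or_pos (covN E δ) with h0 | hpos
  · rw [h0]
    simp only [Nat.cast_zero, Real.log_zero, zero_div]
    positivity
  · have hc1 : (1:ℝ) ≤ (covN E δ : ℝ) := by exact_mod_cast hpos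
    have hbound := covN_le_of_subset_ball hn hR0 hsub hδ0 hδ1
    have hlogb : Real.log (covN E δ) ≤ n * (Real.log C + Real.log (1 / δ)) := by
      calc Real.log (covN E δ) ≤ Real.log ((C / δ) ^ n) :=
            Real.log_le_log (by linarith) (by rw [hC]; exact hbound)
        _ = n * Real.log (C / δ) := by rw [Real.log_pow]
        _ = n * (Real.log C + Real.log (1 / δ)) := by
            rw [div_eq_mul_one_div C δ, Real.log_mul (by linarith) (by positivity)]
    calc Real.log (covN E δ) / Real.log (1 / δ)
        ≤ n * (Real.log C + Real.log (1 / δ)) / Real.log (1 / δ) := by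
          exact div_le_div_of_nonneg_right hlogb hL0.le
      _ = n * Real.log C / Real.log (1 / δ) + n := by
          rw [mul_add, add_div, mul_div_assoc, mul_div_assoc, div_self (ne_of_gt hL0), mul_one]
      _ ≤ n * Real.log C / Real.log 2 + n := by
          have : n * Real.log C / Real.log (1 / δ) ≤ n * Real.log C / Real.log 2 := by
            apply div_le_div_of_nonneg_left (by positivity) hlog2 hL
          linarith

lemma covN_eventually_le {n : ℕ} (hn : 0 < n) {E : Set (EuclideanSpace ℝ (Fin n))}
    (hE : IsBounded E) {t : ℝ} (ht : (ubDim E).toReal < t) :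
    ∀ᶠ δ in 𝓝[>] (0:ℝ), 0 < δ ∧ δ ≤ 1 ∧ (covN E δ : ℝ) ≤ (1 / δ) ^ t ∧
      ∃ S : Finset (EuclideanSpace ℝ (Fin n)), S.card = covN E δ ∧
        E ⊆ ⋃ x ∈ S, Metric.ball x δ := by
  have hlimsup : Filter.limsup (fun δ : ℝ => Real.log (covN E δ) / Real.log (1 / δ))
      (𝓝[>] (0:ℝ)) < t := by
    refine lt_of_le_of_lt ?_ ht
    rw [ubDim, ENNReal.toReal_ofReal']
    exact le_max_left _ _
  have hev := Filter.eventually_lt_of_limsup_lt hlimsup (covN_isBoundedUnder hn hE)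
  filter_upwards [hev, Ioo_mem_nhdsGT_of_mem (Set.left_mem_Ico.2 one_half_pos)] with δ hfδ hδ
  obtain ⟨hδ0, hδh⟩ := hδ
  have hδ1 : δ ≤ 1 := by linarith
  refine ⟨hδ0, hδ1, ?_, covN_exists_cover hn hE hδ0 hδ1⟩
  have hL0 : 0 < Real.log (1 / δ) := Real.log_pos (by rw [lt_div_iff₀ hδ0]; linarith)
  rcases Nat.eq_zero_or_pos (covN E δ) with h0 | hpos
  · rw [h0, Nat.cast_zero]
    positivity
  · have hc0 : (0:ℝ) < (covN E δ : ℝ) := by exact_mod_cast hpos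
    have hlt : Real.log (covN E δ) < t * Real.log (1 / δ) := by
      rw [div_lt_iff₀ hL0] at hfδ; linarith
    calc (covN E δ : ℝ) = Real.exp (Real.log (covN E δ)) := (Real.exp_log hc0).symm
      _ ≤ Real.exp (Real.log (1 / δ) * t) := by
          apply Real.exp_le_exp.2; linarith
      _ = (1 / δ) ^ t := (Real.rpow_def_of_pos (by positivity) t).symm

lemma rpow_calc {δ s t : ℝ} (hδ : 0 < δ) : (1/δ)^t * (3*δ)^(s+t) = 3^(s+t) * δ^s := by
  have h1 : ((3:ℝ)*δ)^(s+t) = 3^(s+t) * δ^(s+t) := Real.mul_rpow (by norm_num) hδ.le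
  have h2 : ((1:ℝ)/δ)^t = (δ^t)⁻¹ := by rw [one_div, Real.inv_rpow hδ.le]
  rw [h1, h2, Real.rpow_add hδ]
  have h3 : δ^t ≠ 0 := ne_of_gt (Real.rpow_pos_of_pos hδ t)
  field_simp

lemma key_lemma {n : ℕ} (hn : 0 < n) (A E : Set (EuclideanSpace ℝ (Fin n)))
    (hE : IsBounded E) {s t : ℝ} (hs : 0 < s) (hds : dimH A < ENNReal.ofReal s)
    (hdt : (ubDim E).toReal < t) : dimH (A + E) ≤ ENNReal.ofReal (s + t) := by
  classical
  have ht0 : 0 < t := lt_of_le_of_lt ENNReal.toReal_nonneg hdt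
  have hst : 0 < s + t := by linarith
  obtain ⟨δ₁, hδ₁, hP'⟩ :=
    mem_nhdsGT_iff_exists_Ioo_subset.1 (covN_eventually_le hn hE hdt)
  rw [Set.mem_Ioi] at hδ₁
  have hP : ∀ δ ∈ Set.Ioo (0:ℝ) δ₁, 0 < δ ∧ δ ≤ 1 ∧ (covN E δ : ℝ) ≤ (1 / δ) ^ t ∧
      ∃ S : Finset (EuclideanSpace ℝ (Fin n)), S.card = covN E δ ∧
        E ⊆ ⋃ x ∈ S, Metric.ball x δ := fun δ hδ => hP' hδ
  have hμA : μH[s] A = 0 := by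
    have h1 : dimH A < ((s.toNNReal : ℝ≥0) : ℝ≥0∞) := hds
    have h2 := hausdorffMeasure_of_dimH_lt h1
    rwa [Real.coe_toNNReal s hs.le] at h2
  have hcov : ∀ r' : ℝ, 0 < r' → ∀ ε : ℝ≥0∞, 0 < ε →
      ∃ c : ℕ → Set (EuclideanSpace ℝ (Fin n)), (A ⊆ ⋃ j, c j) ∧
        (∀ j, EMetric.diam (c j) ≤ ENNReal.ofReal r') ∧
        ∑' j, ⨆ _ : (c j).Nonempty, EMetric.diam (c j) ^ s < ε := by
    intro r' hr' ε hε
    have hterm : (⨅ (c : ℕ → Set (EuclideanSpace ℝ (Fin n))) (_ : A ⊆ ⋃ j, c j)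
        (_ : ∀ j, EMetric.diam (c j) ≤ ENNReal.ofReal r'),
        ∑' j, ⨆ _ : (c j).Nonempty, EMetric.diam (c j) ^ s) ≤ μH[s] A := by
      rw [MeasureTheory.Measure.hausdorffMeasure_apply]
      exact le_iSup₂ (f := fun (r : ℝ≥0∞) (_ : 0 < r) =>
        ⨅ (c : ℕ → Set (EuclideanSpace ℝ (Fin n))) (_ : A ⊆ ⋃ j, c j)
          (_ : ∀ j, EMetric.diam (c j) ≤ r),
          ∑' j, ⨆ _ : (c j).Nonempty, EMetric.diam (c j) ^ s)
        (ENNReal.ofReal r') (ENNReal.ofReal_pos.2 hr')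
    rw [hμA] at hterm
    have h2 := lt_of_le_of_lt hterm hε
    simp only [iInf_lt_iff] at h2
    obtain ⟨c, h1', h2', h3'⟩ := h2
    exact ⟨c, h1', h2', h3'⟩
  set base : ℝ := min (δ₁/2) (2⁻¹) with hbase
  have hbase0 : 0 < base := lt_min (by linarith) (by norm_num)
  set q : ℝ≥0∞ := ENNReal.ofReal ((2⁻¹:ℝ) ^ s) with hq
  have hq1 : q < 1 := by
    rw [hq, ← ENNReal.ofReal_one]
    exact (ENNReal.ofReal_lt_ofReal_iff one_pos).2
      (Real.rpow_lt_one (by norm_num) (by norm_num) hs)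
  set Cg : ℝ≥0∞ := (1 - q)⁻¹ with hCgdef
  have hCg : Cg ≠ ∞ := by
    rw [hCgdef]
    exact ENNReal.inv_ne_top.2 fun h => absurd (tsub_eq_zero_iff_le.mp h) (not_le.2 hq1)
  set K : ℝ≥0∞ := ENNReal.ofReal ((3:ℝ)^(s+t)) * (1 + Cg) with hKdef
  have hK : K ≠ ∞ := by
    rw [hKdef]
    exact ENNReal.mul_ne_top ENNReal.ofReal_ne_top
      (ENNReal.add_ne_top.2 ⟨ENNReal.one_ne_top, hCg⟩)
  have claim : ∀ k : ℕ, ∃ U : ℕ × ℕ → Set (EuclideanSpace ℝ (Fin n)),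
      (A + E ⊆ ⋃ p, U p) ∧
      (∀ p, EMetric.diam (U p) ≤ ENNReal.ofReal (4 * (base * 2⁻¹ ^ k))) ∧
      (∑' p : ℕ × ℕ, EMetric.diam (U p) ^ (s + t) ≤ K * ENNReal.ofReal ((2⁻¹:ℝ) ^ k)) := by
    intro k
    set εr : ℝ := (2⁻¹:ℝ) ^ k with hεrdef
    have hεr0 : 0 < εr := by positivity
    have hεr1 : εr ≤ 1 := pow_le_one₀ (by norm_num) (by norm_num)
    set r' : ℝ := base * εr with hr'def
    have hr'0 : 0 < r' := by positivity
    have hr'b : r' ≤ base := mul_le_of_le_one_right hbase0.le hεr1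
    have hr'δ : r' ≤ δ₁ / 2 := hr'b.trans (min_le_left _ _)
    obtain ⟨c, hcA, hcdiam, hcsum⟩ := hcov r' hr'0 (ENNReal.ofReal εr) (ENNReal.ofReal_pos.2 hεr0)
    set η : ℝ := min r' (εr ^ s⁻¹) with hηdef
    have hη0 : 0 < η := lt_min hr'0 (Real.rpow_pos_of_pos hεr0 _)
    have hηs : η ^ s ≤ εr := by
      calc η ^ s ≤ (εr ^ s⁻¹) ^ s :=
            Real.rpow_le_rpow hη0.le (min_le_right _ _) hs.le
        _ = εr := by
            rw [← Real.rpow_mul hεr0.le, inv_mul_cancel₀ hs.ne', Real.rpow_one]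
    set δf : ℕ → ℝ := fun j => max ((EMetric.diam (c j)).toReal) (η * 2⁻¹ ^ j) with hδfdef
    have hδf0 : ∀ j, 0 < δf j := fun j =>
      lt_of_lt_of_le (by positivity) (le_max_right _ _)
    have hcne : ∀ j, EMetric.diam (c j) ≠ ∞ := fun j =>
      (lt_of_le_of_lt (hcdiam j) ENNReal.ofReal_lt_top).ne
    have hδfr' : ∀ j, δf j ≤ r' := by
      intro j
      apply max_le
      · exact ENNReal.toReal_le_of_le_ofReal hr'0.le (hcdiam j)
      · calc η * 2⁻¹ ^ j ≤ η * 1 := by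
              apply mul_le_mul_of_nonneg_left _ hη0.le
              exact pow_le_one₀ (by norm_num) (by norm_num)
          _ = η := mul_one η
          _ ≤ r' := min_le_left _ _
    have hδfIoo : ∀ j, δf j ∈ Set.Ioo (0:ℝ) δ₁ :=
      fun j => ⟨hδf0 j, lt_of_le_of_lt (hδfr' j) (by linarith)⟩
    have hSex : ∀ j, ∃ S : Finset (EuclideanSpace ℝ (Fin n)), S.card = covN E (δf j) ∧
        E ⊆ ⋃ x ∈ S, Metric.ball x (δf j) := fun j => (hP (δf j) (hδfIoo j)).2.2.2
    choose S hScard hScov using hSex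
    have hcount : ∀ j, (covN E (δf j) : ℝ) ≤ (1 / δf j) ^ t :=
      fun j => (hP (δf j) (hδfIoo j)).2.2.1
    set V : ℕ → ℕ → Set (EuclideanSpace ℝ (Fin n)) := fun j i =>
      if h : i < (S j).toList.length then Metric.ball ((S j).toList.get ⟨i, h⟩) (δf j)
      else ∅ with hVdef
    have hUd3 : ∀ j i, EMetric.diam (c j + V j i) ≤ ENNReal.ofReal (3 * δf j) := by
      intro j i
      have hVd : EMetric.diam (V j i) ≤ ENNReal.ofReal (2 * δf j) := by
        simp only [hVdef]
        split
        · rw [← Metric.emetric_ball]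
          refine (EMetric.diam_ball).trans ?_
          rw [ENNReal.ofReal_mul (by norm_num)]
          norm_num
        · simp [EMetric.diam]
      have hcd : EMetric.diam (c j) ≤ ENNReal.ofReal (δf j) := by
        rw [← ENNReal.ofReal_toReal (hcne j)]
        exact ENNReal.ofReal_le_ofReal (le_max_left _ _)
      calc EMetric.diam (c j + V j i) ≤ EMetric.diam (c j) + EMetric.diam (V j i) :=
            my_diam_add_le _ _
        _ ≤ ENNReal.ofReal (δf j) + ENNReal.ofReal (2 * δf j) := add_le_add hcd hVd
        _ = ENNReal.ofReal (3 * δf j) := by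
            rw [← ENNReal.ofReal_add (hδf0 j).le (by positivity)]
            ring_nf
    refine ⟨fun p => c p.1 + V p.1 p.2, ?_, ?_, ?_⟩
    · rintro p ⟨a, ha, e, he, rfl⟩
      obtain ⟨j, hj⟩ := Set.mem_iUnion.1 (hcA ha)
      obtain ⟨x, hxS, hxe⟩ := Set.mem_iUnion₂.1 (hScov j he)
      obtain ⟨i, hi⟩ := List.mem_iff_get.1 (Finset.mem_toList.2 hxS)
      refine Set.mem_iUnion.2 ⟨(j, i.1), Set.add_mem_add hj ?_⟩
      show e ∈ V j i.1
      simp only [hVdef]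
      rw [dif_pos i.isLt]
      simp only [Fin.eta, hi]
      exact hxe
    · intro p
      refine (hUd3 p.1 p.2).trans (ENNReal.ofReal_le_ofReal ?_)
      have h9 := hδfr' p.1
      rw [hr'def] at h9
      linarith [hδf0 p.1]
    · show (∑' p : ℕ × ℕ, EMetric.diam (c p.1 + V p.1 p.2) ^ (s+t)) ≤ K * ENNReal.ofReal εr
      rw [ENNReal.tsum_prod (f := fun j i => EMetric.diam (c j + V j i) ^ (s+t))]
      have hb : ∀ j : ℕ, ((η * 2⁻¹ ^ j) ^ s) = η ^ s * ((2⁻¹:ℝ) ^ s) ^ j := by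
        intro j
        rw [Real.mul_rpow hη0.le (by positivity), ← Real.rpow_natCast (2⁻¹:ℝ) j,
          ← Real.rpow_mul (by norm_num), mul_comm (j:ℝ) s, Real.rpow_mul (by norm_num),
          Real.rpow_natCast]
      have hinner : ∀ j, (∑' i : ℕ, EMetric.diam (c j + V j i) ^ (s + t)) ≤
          ENNReal.ofReal ((3:ℝ) ^ (s+t)) *
            ((⨆ _ : (c j).Nonempty, EMetric.diam (c j) ^ s) +
              ENNReal.ofReal ((η * 2⁻¹ ^ j) ^ s)) := by
        intro j
        rcases Set.eq_empty_or_nonempty (c j) with hje | hje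
        · have hz : ∀ i : ℕ, EMetric.diam (c j + V j i) ^ (s + t) = 0 := by
            intro i
            rw [hje, Set.empty_add, (by exact Metric.ediam_empty : EMetric.diam (∅ : Set (EuclideanSpace ℝ (Fin n))) = 0), ENNReal.zero_rpow_of_pos hst]
          rw [tsum_congr hz, tsum_zero]
          exact zero_le
        · have hterm : ∀ i : ℕ, EMetric.diam (c j + V j i) ^ (s + t) ≤
              (if i < (S j).toList.length then ENNReal.ofReal ((3 * δf j) ^ (s+t)) else 0) := by
            intro i
            by_cases h : i < (S j).toList.length
            · rw [if_pos h]
              calc EMetric.diam (c j + V j i) ^ (s+t)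
                  ≤ (ENNReal.ofReal (3 * δf j)) ^ (s+t) :=
                    ENNReal.rpow_le_rpow (hUd3 j i) hst.le
                _ = ENNReal.ofReal ((3 * δf j) ^ (s+t)) :=
                    ENNReal.ofReal_rpow_of_nonneg (by positivity) hst.le
            · rw [if_neg h]
              have hVi : V j i = ∅ := by simp only [hVdef]; rw [dif_neg h]
              rw [hVi, Set.add_empty, (by exact Metric.ediam_empty : EMetric.diam (∅ : Set (EuclideanSpace ℝ (Fin n))) = 0), ENNReal.zero_rpow_of_pos hst]
          calc (∑' i : ℕ, EMetric.diam (c j + V j i) ^ (s + t))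
              ≤ ∑' i : ℕ, (if i < (S j).toList.length then
                  ENNReal.ofReal ((3 * δf j) ^ (s+t)) else 0) := ENNReal.tsum_le_tsum hterm
            _ = ∑ i ∈ Finset.range (S j).toList.length,
                  (if i < (S j).toList.length then ENNReal.ofReal ((3 * δf j) ^ (s+t)) else 0) := by
                  apply tsum_eq_sum
                  intro i hi
                  rw [if_neg (by simpa using hi)]
            _ = ((S j).toList.length : ℝ≥0∞) * ENNReal.ofReal ((3 * δf j) ^ (s+t)) := by
                  rw [Finset.sum_congr rfl (fun i hi => if_pos (Finset.mem_range.1 hi)),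
                    Finset.sum_const, Finset.card_range, nsmul_eq_mul]
            _ = (covN E (δf j) : ℝ≥0∞) * ENNReal.ofReal ((3 * δf j) ^ (s+t)) := by
                  rw [Finset.length_toList, hScard j]
            _ ≤ ENNReal.ofReal ((1 / δf j) ^ t) * ENNReal.ofReal ((3 * δf j) ^ (s+t)) := by
                  have h10 : (covN E (δf j) : ℝ≥0∞) = ENNReal.ofReal ((covN E (δf j) : ℝ)) :=
                    (ENNReal.ofReal_natCast _).symm
                  rw [h10]
                  exact mul_le_mul_left (ENNReal.ofReal_le_ofReal (hcount j)) _
            _ = ENNReal.ofReal ((1 / δf j) ^ t * (3 * δf j) ^ (s+t)) :=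
                  (ENNReal.ofReal_mul (by positivity)).symm
            _ = ENNReal.ofReal ((3:ℝ)^(s+t) * (δf j) ^ s) := by rw [rpow_calc (hδf0 j)]
            _ = ENNReal.ofReal ((3:ℝ)^(s+t)) * ENNReal.ofReal ((δf j) ^ s) :=
                  ENNReal.ofReal_mul (by positivity)
            _ ≤ _ := by
                  apply mul_le_mul_right
                  rcases max_choice ((EMetric.diam (c j)).toReal) (η * 2⁻¹ ^ j) with hmax | hmax
                  · have h11 : ENNReal.ofReal ((δf j)^s) = EMetric.diam (c j) ^ s := by
                      simp only [hδfdef]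
                      rw [hmax, ← ENNReal.ofReal_rpow_of_nonneg ENNReal.toReal_nonneg hs.le,
                        ENNReal.ofReal_toReal (hcne j)]
                    rw [h11, iSup_pos hje]
                    exact le_self_add
                  · have h11 : ENNReal.ofReal ((δf j)^s) = ENNReal.ofReal ((η * 2⁻¹ ^ j)^s) := by
                      simp only [hδfdef]
                      rw [hmax]
                    rw [h11]
                    exact le_add_self
      calc (∑' j, ∑' i, EMetric.diam (c j + V j i) ^ (s + t))
          ≤ ∑' j, (ENNReal.ofReal ((3:ℝ) ^ (s+t)) *
            ((⨆ _ : (c j).Nonempty, EMetric.diam (c j) ^ s) +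
              ENNReal.ofReal ((η * 2⁻¹ ^ j) ^ s))) := ENNReal.tsum_le_tsum hinner
        _ = ENNReal.ofReal ((3:ℝ)^(s+t)) *
              ((∑' j, ⨆ _ : (c j).Nonempty, EMetric.diam (c j) ^ s) +
                ∑' j, ENNReal.ofReal ((η * 2⁻¹ ^ j) ^ s)) := by
            rw [ENNReal.tsum_mul_left, ENNReal.tsum_add]
        _ ≤ ENNReal.ofReal ((3:ℝ)^(s+t)) * (ENNReal.ofReal εr + ENNReal.ofReal εr * Cg) := by
            apply mul_le_mul_right
            refine add_le_add hcsum.le ?_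
            have h12 : ∀ j : ℕ, ENNReal.ofReal ((η * 2⁻¹ ^ j) ^ s) =
                ENNReal.ofReal (η ^ s) * q ^ j := by
              intro j
              rw [hb j, ENNReal.ofReal_mul (by positivity), hq,
                ENNReal.ofReal_pow (by positivity)]
            rw [tsum_congr h12, ENNReal.tsum_mul_left, ENNReal.tsum_geometric]
            exact mul_le_mul_left (ENNReal.ofReal_le_ofReal hηs) _
        _ = K * ENNReal.ofReal εr := by
            rw [hKdef]; ring
  choose U hUcov hUdiam hUsum using claim
  have htendr : Tendsto (fun k : ℕ => ENNReal.ofReal (4 * (base * 2⁻¹ ^ k))) atTop (𝓝 0) := by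
    have h1 : Tendsto (fun k : ℕ => 4 * (base * 2⁻¹ ^ k)) atTop (𝓝 0) := by
      have h0 := tendsto_pow_atTop_nhds_zero_of_lt_one
        (by norm_num : (0:ℝ) ≤ 2⁻¹) (by norm_num : (2⁻¹:ℝ) < 1)
      have h2 := h0.const_mul (4*base)
      simp only [mul_zero] at h2
      refine h2.congr fun k => by ring
    have h2 := (ENNReal.continuous_ofReal.tendsto 0).comp h1
    simpa [Function.comp_def] using h2
  have hμ := MeasureTheory.Measure.hausdorffMeasure_le_liminf_tsum (s + t) (A + E)
    (fun k => ENNReal.ofReal (4 * (base * 2⁻¹ ^ k))) htendr (fun k p => U k p)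
    (Eventually.of_forall hUdiam) (Eventually.of_forall hUcov)
  have hlim : liminf (fun k => ∑' p : ℕ × ℕ, EMetric.diam (U k p) ^ (s+t)) atTop ≤
      liminf (fun k => K * ENNReal.ofReal ((2⁻¹:ℝ)^k)) atTop :=
    liminf_le_liminf (Eventually.of_forall hUsum)
  have htend : Tendsto (fun k : ℕ => K * ENNReal.ofReal ((2⁻¹:ℝ)^k)) atTop (𝓝 0) := by
    have h1 : Tendsto (fun k : ℕ => ENNReal.ofReal ((2⁻¹:ℝ)^k)) atTop (𝓝 0) := by
      have h0 := tendsto_pow_atTop_nhds_zero_of_lt_one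
        (by norm_num : (0:ℝ) ≤ 2⁻¹) (by norm_num : (2⁻¹:ℝ) < 1)
      have h2 := (ENNReal.continuous_ofReal.tendsto 0).comp h0
      simpa [Function.comp_def] using h2
    have h3 := ENNReal.Tendsto.const_mul h1 (Or.inr hK)
    simpa using h3
  have hμ0 : μH[s + t] (A + E) = 0 :=
    le_zero_iff.1 (hμ.trans (hlim.trans_eq htend.liminf_eq))
  have hfin : μH[(((s+t).toNNReal : ℝ≥0) : ℝ)] (A + E) ≠ ∞ := by
    rw [Real.coe_toNNReal _ hst.le, hμ0]
    exact ENNReal.zero_ne_top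
  exact dimH_le_of_hausdorffMeasure_ne_top hfin

lemma dimH_add_le {n : ℕ} (hn : 0 < n) (A E : Set (EuclideanSpace ℝ (Fin n)))
    (hE : IsBounded E) : dimH (A + E) ≤ dimH A + ubDim E := by
  have hAfin : dimH A ≠ ∞ := by
    refine ne_top_of_le_ne_top ?_ (dimH_mono (Set.subset_univ A))
    rw [Real.dimH_univ_eq_finrank (EuclideanSpace ℝ (Fin n))]
    exact ENNReal.natCast_ne_top _
  have hEfin : ubDim E ≠ ∞ := by rw [ubDim]; exact ENNReal.ofReal_ne_top
  refine ENNReal.le_of_forall_pos_le_add fun ε hε _ => ?_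
  have hεR : (0:ℝ) < (ε:ℝ) := hε
  set s : ℝ := (dimH A).toReal + ε/2 with hsdef
  set t : ℝ := (ubDim E).toReal + ε/2 with htdef
  have hs : 0 < s := by
    have := ENNReal.toReal_nonneg (a := dimH A); rw [hsdef]; linarith
  have hds : dimH A < ENNReal.ofReal s := by
    conv_lhs => rw [← ENNReal.ofReal_toReal hAfin]
    rw [ENNReal.ofReal_lt_ofReal_iff (by positivity)]
    rw [hsdef]; linarith
  have hdt : (ubDim E).toReal < t := by rw [htdef]; linarith
  have h := key_lemma hn A E hE hs hds hdt
  refine h.trans (le_of_eq ?_)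
  have hst : s + t = ((dimH A).toReal + (ubDim E).toReal) + (ε:ℝ) := by
    rw [hsdef, htdef]; ring
  rw [hst, ENNReal.ofReal_add (by positivity) hεR.le,
    ENNReal.ofReal_add ENNReal.toReal_nonneg ENNReal.toReal_nonneg,
    ENNReal.ofReal_toReal hAfin, ENNReal.ofReal_toReal hEfin,
    ENNReal.ofReal_coe_nnreal]

/-- If Borel sets satisfy `A + B = ℝⁿ` then `dim_H A + dim_P B ≥ n`. -/
theorem stmt2 (n : ℕ) (A B : Set (EuclideanSpace ℝ (Fin n)))
    (hA : MeasurableSet A) (hB : MeasurableSet B) (hAB : A + B = Set.univ) :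
    (n : ℝ≥0∞) ≤ dimH A + packDim B := by
  rcases Nat.eq_zero_or_pos n with rfl | hn
  · simp
  have hdim : ∀ F : ℕ → Set (EuclideanSpace ℝ (Fin n)), B ⊆ ⋃ i, F i →
      (∀ i, IsBounded (F i)) → (n : ℝ≥0∞) ≤ dimH A + ⨆ i, ubDim (F i) := by
    intro F hcov hbd
    have h1 : (n : ℝ≥0∞) = dimH (Set.univ : Set (EuclideanSpace ℝ (Fin n))) := by
      rw [Real.dimH_univ_eq_finrank (EuclideanSpace ℝ (Fin n)), finrank_euclideanSpace_fin]
    rw [h1, ← hAB]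
    calc dimH (A + B) ≤ dimH (⋃ i, A + F i) := by
          apply dimH_mono
          rintro p ⟨a, ha, b, hb, rfl⟩
          obtain ⟨i, hi⟩ := Set.mem_iUnion.1 (hcov hb)
          exact Set.mem_iUnion.2 ⟨i, Set.add_mem_add ha hi⟩
      _ = ⨆ i, dimH (A + F i) := dimH_iUnion _
      _ ≤ ⨆ i, (dimH A + ubDim (F i)) :=
          iSup_mono fun i => dimH_add_le hn A (F i) (hbd i)
      _ ≤ dimH A + ⨆ i, ubDim (F i) := iSup_le fun i => add_le_add_right (le_iSup (fun i => ubDim (F i)) i) (dimH A)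
  rw [packDim]
  simp_rw [ENNReal.add_iInf]
  exact le_iInf fun F => le_iInf fun hcov => le_iInf fun hbd => hdim F hcov hbd
end

section
/- Let (r_k) and (ε_k) be decreasing sequences of positive reals tending to zero with ∑ ε_k < ∞, and let A₀ ⊆ ℝ^n be Lebesgue measurable with positive measure. Then there exists a non-empty compact subset A ⊆ closure(A₀) and an index k₀ such that for all k ≥ k₀ and all x ∈ A, λ(A ∩ (x + [−r_k, r_k]^n)) ≥ (2 r_k)^n · ε_k. -/
open Set Filter MeasureTheory
open scoped ENNReal NNReal Topology

namespace Stmt6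

variable {n : ℕ}


variable {n : ℕ}

/-- level-`s` dyadic cube with index `j` -/
def dcube (n s : ℕ) (j : Fin n → ℤ) : Set (EuclideanSpace ℝ (Fin n)) :=
  {y | ∀ i, ⌊2 ^ s * y i⌋ = j i}

/-- dyadic index of a point at level `s` -/
noncomputable def didx (n s : ℕ) (y : EuclideanSpace ℝ (Fin n)) : Fin n → ℤ :=
  fun i => ⌊2 ^ s * y i⌋

lemma mem_dcube_iff {s : ℕ} {j : Fin n → ℤ} {y : EuclideanSpace ℝ (Fin n)} :
    y ∈ dcube n s j ↔ ∀ i, ⌊2 ^ s * y i⌋ = j i := Iff.rfl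

lemma mem_dcube_didx (s : ℕ) (y : EuclideanSpace ℝ (Fin n)) :
    y ∈ dcube n s (didx n s y) := fun _ => rfl

lemma didx_eq_of_mem {s : ℕ} {j : Fin n → ℤ} {y : EuclideanSpace ℝ (Fin n)}
    (h : y ∈ dcube n s j) : didx n s y = j := funext h

lemma dcube_eq_box (s : ℕ) (j : Fin n → ℤ) :
    dcube n s j = {y : EuclideanSpace ℝ (Fin n) |
      ∀ i, y i ∈ Ico ((j i : ℝ) / 2 ^ s) (((j i : ℝ) + 1) / 2 ^ s)} := by
  have h2 : (0:ℝ) < 2 ^ s := by positivity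
  ext y
  simp only [dcube, mem_setOf_eq, mem_Ico]
  refine forall_congr' fun i => ?_
  rw [Int.floor_eq_iff]
  constructor
  · rintro ⟨ha, hb⟩
    constructor
    · rw [div_le_iff₀ h2]; nlinarith
    · rw [lt_div_iff₀ h2]; nlinarith
  · rintro ⟨ha, hb⟩
    rw [div_le_iff₀ h2] at ha
    rw [lt_div_iff₀ h2] at hb
    exact ⟨by nlinarith, by push_cast; nlinarith⟩

/-- the volume of a level-`s` dyadic cube -/
noncomputable def dvol (n s : ℕ) : ℝ≥0∞ := (ENNReal.ofReal (((2:ℝ) ^ s)⁻¹)) ^ n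

lemma dvol_def (n s : ℕ) : dvol n s = (ENNReal.ofReal (((2:ℝ) ^ s)⁻¹)) ^ n := rfl

lemma volume_box (a b : Fin n → ℝ) :
    volume {y : EuclideanSpace ℝ (Fin n) | ∀ i, y i ∈ Ico (a i) (b i)} =
      ∏ i, ENNReal.ofReal (b i - a i) := by
  have hs : {y : EuclideanSpace ℝ (Fin n) | ∀ i, y i ∈ Ico (a i) (b i)} =
      (MeasurableEquiv.toLp 2 (Fin n → ℝ)).symm ⁻¹' (univ.pi fun i => Ico (a i) (b i)) := by
    ext y; simp [Set.mem_pi]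
  rw [hs, (EuclideanSpace.volume_preserving_symm_measurableEquiv_toLp (Fin n)).measure_preimage
    (MeasurableSet.univ_pi fun i => measurableSet_Ico).nullMeasurableSet,
    volume_pi_pi]
  simp [Real.volume_Ico]

lemma measurableSet_box (a b : Fin n → ℝ) :
    MeasurableSet {y : EuclideanSpace ℝ (Fin n) | ∀ i, y i ∈ Ico (a i) (b i)} := by
  have hs : {y : EuclideanSpace ℝ (Fin n) | ∀ i, y i ∈ Ico (a i) (b i)} =
      (MeasurableEquiv.toLp 2 (Fin n → ℝ)).symm ⁻¹' (univ.pi fun i => Ico (a i) (b i)) := by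
    ext y; simp [Set.mem_pi]
  rw [hs]
  exact (MeasurableEquiv.toLp 2 (Fin n → ℝ)).symm.measurable
    (MeasurableSet.univ_pi fun i => measurableSet_Ico)

lemma volume_dcube (s : ℕ) (j : Fin n → ℤ) : volume (dcube n s j) = dvol n s := by
  rw [dcube_eq_box, volume_box, dvol]
  have : ∀ i : Fin n, ENNReal.ofReal (((j i : ℝ) + 1) / 2 ^ s - (j i : ℝ) / 2 ^ s) =
      ENNReal.ofReal (((2:ℝ) ^ s)⁻¹) := by
    intro i; congr 1; field_simp; ring
  simp [this]

lemma measurableSet_dcube (s : ℕ) (j : Fin n → ℤ) : MeasurableSet (dcube n s j) := by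
  rw [dcube_eq_box]; exact measurableSet_box _ _

lemma dvol_ne_top (n s : ℕ) : dvol n s ≠ ∞ := by
  simp [dvol, ENNReal.pow_ne_top, ENNReal.ofReal_ne_top]

lemma dcube_disjoint (s : ℕ) : Pairwise (Function.onFun Disjoint fun j : Fin n → ℤ => dcube n s j) := by
  intro j j' hne
  simp only [Function.onFun, Set.disjoint_left]
  intro y hy hy'
  exact hne (by rw [← didx_eq_of_mem hy, ← didx_eq_of_mem hy'])

lemma iUnion_dcube (s : ℕ) : (⋃ j : Fin n → ℤ, dcube n s j) = univ := by
  ext y; simp only [mem_iUnion, mem_univ, iff_true]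
  exact ⟨didx n s y, mem_dcube_didx s y⟩

/-- Core floor determinacy -/
lemma floor_det {d : ℕ} {m : ℤ} {u v : ℝ} (hu : ⌊u * 2 ^ d⌋ = m) (hv : ⌊v * 2 ^ d⌋ = m) :
    ⌊u⌋ = ⌊v⌋ := by
  have h2 : (0:ℤ) < 2 ^ d := by positivity
  have h2r : (0:ℝ) < 2 ^ d := by positivity
  set q : ℤ := m / 2 ^ d with hq
  have hqm : 2 ^ d * q + m % 2 ^ d = m := Int.mul_ediv_add_emod m (2 ^ d)
  have hr0 : 0 ≤ m % 2 ^ d := Int.emod_nonneg m (by positivity)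
  have hr1 : m % 2 ^ d < 2 ^ d := Int.emod_lt_of_pos m h2
  have key : ∀ w : ℝ, ⌊w * 2 ^ d⌋ = m → ⌊w⌋ = q := by
    intro w hw
    rw [Int.floor_eq_iff] at hw ⊢
    obtain ⟨hw1, hw2⟩ := hw
    have hql : q * 2 ^ d ≤ m := by nlinarith
    have hqu : m + 1 ≤ (q + 1) * 2 ^ d := by nlinarith
    have hqlr : (q : ℝ) * 2 ^ d ≤ (m : ℝ) := by exact_mod_cast hql
    have hqur : (m : ℝ) + 1 ≤ ((q : ℝ) + 1) * 2 ^ d := by exact_mod_cast hqu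
    constructor
    · nlinarith
    · push_cast; nlinarith
  rw [key u hu, key v hv]

/-- nesting of dyadic cubes: a finer cube meeting a coarser one is contained in it -/
lemma dcube_subset {s' s : ℕ} (hss : s' ≤ s) {j j' : Fin n → ℤ}
    {w : EuclideanSpace ℝ (Fin n)} (hw : w ∈ dcube n s j) (hw' : w ∈ dcube n s' j') :
    dcube n s j ⊆ dcube n s' j' := by
  intro z hz i
  have hd : (2:ℝ) ^ s = 2 ^ s' * 2 ^ (s - s') := by
    rw [← pow_add]; congr 1; omega
  have hwz : ⌊(2 ^ s' * w i) * 2 ^ (s - s')⌋ = j i := by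
    have he : (2 ^ s' * w i) * 2 ^ (s - s') = 2 ^ s * w i := by rw [hd]; ring
    rw [he]; exact hw i
  have hzz : ⌊(2 ^ s' * z i) * 2 ^ (s - s')⌋ = j i := by
    have he : (2 ^ s' * z i) * 2 ^ (s - s') = 2 ^ s * z i := by rw [hd]; ring
    rw [he]; exact hz i
  have := floor_det hzz hwz
  rw [this]; exact hw' i

/-- partition of the measure of a set along level-`s` dyadic cubes -/
lemma meas_partition (S : Set (EuclideanSpace ℝ (Fin n))) (hS : MeasurableSet S) (s : ℕ) :
    volume S = ∑' j : Fin n → ℤ, volume (S ∩ dcube n s j) := by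
  conv_lhs => rw [← inter_univ S, ← iUnion_dcube (n := n) s]
  rw [inter_iUnion, measure_iUnion]
  · intro j j' hne
    exact ((dcube_disjoint s hne).mono inter_subset_right inter_subset_right)
  · exact fun j => hS.inter (measurableSet_dcube s j)

variable (E : Set (EuclideanSpace ℝ (Fin n))) (h : ℕ → ℝ≥0∞)

/-- the union of the "low mass" dyadic cubes at level `s` -/
def Lset (s : ℕ) : Set (EuclideanSpace ℝ (Fin n)) :=
  ⋃ j ∈ {j : Fin n → ℤ | volume (E ∩ dcube n s j) < h s * dvol n s}, dcube n s j

lemma measurableSet_Lset (s : ℕ) : MeasurableSet (Lset E h s) :=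
  MeasurableSet.biUnion (to_countable _) (fun j _ => measurableSet_dcube s j)

lemma mem_Lset_iff {s : ℕ} {y : EuclideanSpace ℝ (Fin n)} :
    y ∈ Lset E h s ↔ volume (E ∩ dcube n s (didx n s y)) < h s * dvol n s := by
  constructor
  · rintro hy
    simp only [Lset, mem_iUnion, mem_setOf_eq] at hy
    obtain ⟨j, hj, hyj⟩ := hy
    rwa [didx_eq_of_mem hyj]
  · intro hy
    simp only [Lset, mem_iUnion, mem_setOf_eq]
    exact ⟨didx n s y, hy, mem_dcube_didx s y⟩

/-- a low cube is contained in `Lset` -/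
lemma dcube_subset_Lset {s : ℕ} {j : Fin n → ℤ}
    (hj : volume (E ∩ dcube n s j) < h s * dvol n s) : dcube n s j ⊆ Lset E h s := by
  intro z hz
  rw [mem_Lset_iff, didx_eq_of_mem hz]
  exact hj

/-- membership in Lset implies that the point's own cube is low -/
lemma low_of_mem_Lset {s : ℕ} {j : Fin n → ℤ} {y : EuclideanSpace ℝ (Fin n)}
    (hy : y ∈ Lset E h s) (hyj : y ∈ dcube n s j) :
    volume (E ∩ dcube n s j) < h s * dvol n s := by
  rw [mem_Lset_iff] at hy
  rwa [didx_eq_of_mem hyj] at hy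

/-- THE KEY LEMMA: the mass of `E` contained in low cubes of levels `> t` inside a fixed
level-`t` cube is at most `h (t+1)` times the volume of that cube. -/
lemma key_lemma (hE : MeasurableSet E) (hh : Antitone h) (t : ℕ) (J : Fin n → ℤ) :
    volume (E ∩ (⋃ m : ℕ, Lset E h (t + 1 + m)) ∩ dcube n t J) ≤ h (t + 1) * dvol n t := by
  classical
  set D := dcube n t J with hD
  set f : ℕ → Set (EuclideanSpace ℝ (Fin n)) := fun m => Lset E h (t + 1 + m) ∩ D with hf
  set St : ℕ → Set (EuclideanSpace ℝ (Fin n)) :=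
    fun m => f m \ ⋃ (m' : ℕ) (_ : m' < m), f m' with hSt
  have hfmeas : ∀ m, MeasurableSet (f m) := fun m =>
    (measurableSet_Lset E h _).inter (measurableSet_dcube t J)
  have hStmeas : ∀ m, MeasurableSet (St m) := fun m =>
    (hfmeas m).diff (MeasurableSet.iUnion fun m' => MeasurableSet.iUnion fun _ => hfmeas m')
  have hStf : ∀ m, St m ⊆ f m := fun m => diff_subset
  have hUnion : (⋃ m, St m) = ⋃ m, f m := by
    apply Subset.antisymm (iUnion_mono fun m => diff_subset)
    intro z hz
    rw [mem_iUnion] at hz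
    have hex : ∃ m, z ∈ f m := hz
    refine mem_iUnion.2 ⟨Nat.find hex, Nat.find_spec hex, ?_⟩
    simp only [mem_iUnion, not_exists]
    exact fun m' hm' => Nat.find_min hex hm'
  have hStdisj : Pairwise (Function.onFun Disjoint St) := by
    intro m m' hne
    rcases hne.lt_or_gt with hlt | hlt
    · refine Set.disjoint_left.2 fun z hzm hzm' => ?_
      have := hzm'.2
      simp only [mem_iUnion, not_exists] at this
      exact this m hlt (hStf m hzm)
    · refine Set.disjoint_left.2 fun z hzm hzm' => ?_
      have := hzm.2
      simp only [mem_iUnion, not_exists] at this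
      exact this m' hlt (hStf m' hzm')
  -- per-stage bound
  have hstage : ∀ m, volume (E ∩ St m) ≤ h (t + 1 + m) * volume (St m) := by
    intro m
    set s := t + 1 + m with hs
    rw [meas_partition (E ∩ St m) (hE.inter (hStmeas m)) s,
        meas_partition (St m) (hStmeas m) s, ← ENNReal.tsum_mul_left]
    apply ENNReal.tsum_le_tsum
    intro j
    by_cases hne : (St m ∩ dcube n s j).Nonempty
    · obtain ⟨z, hzSt, hzc⟩ := hne
      -- the cube is low
      have hzf : z ∈ f m := hStf m hzSt
      have hlow : volume (E ∩ dcube n s j) < h s * dvol n s :=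
        low_of_mem_Lset E h hzf.1 hzc
      -- the cube is contained in St m
      have hsub : dcube n s j ⊆ St m := by
        intro w hw
        constructor
        · constructor
          · exact dcube_subset_Lset E h hlow hw
          · -- w ∈ D
            exact dcube_subset (by omega) hzc hzf.2 hw
        · -- w not in earlier f's
          simp only [mem_iUnion, not_exists]
          intro m' hm' hwf
          -- z would also be in f m'
          have hzSt2 := hzSt.2
          simp only [mem_iUnion, not_exists] at hzSt2
          apply hzSt2 m' hm'
          have hwL : w ∈ Lset E h (t + 1 + m') := hwf.1
          -- w's level-(t+1+m') cube is low and contains w; it contains the whole dcube n s j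
          have hwc' : w ∈ dcube n (t + 1 + m') (didx n (t + 1 + m') w) := mem_dcube_didx _ w
          have hlow' : volume (E ∩ dcube n (t + 1 + m') (didx n (t + 1 + m') w)) <
              h (t + 1 + m') * dvol n (t + 1 + m') := (mem_Lset_iff E h).1 hwL
          have hsub' : dcube n s j ⊆ dcube n (t + 1 + m') (didx n (t + 1 + m') w) :=
            dcube_subset (by omega) hw hwc'
          exact ⟨dcube_subset_Lset E h hlow' (hsub' hzc), hzf.2⟩
      have heq : St m ∩ dcube n s j = dcube n s j := inter_eq_self_of_subset_right hsub
      calc volume (E ∩ St m ∩ dcube n s j) ≤ volume (E ∩ dcube n s j) :=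
            measure_mono (by intro w hw; exact ⟨hw.1.1, hw.2⟩)
        _ ≤ h s * dvol n s := le_of_lt hlow
        _ = h s * volume (St m ∩ dcube n s j) := by rw [heq, volume_dcube]
    · rw [not_nonempty_iff_eq_empty] at hne
      have : E ∩ St m ∩ dcube n s j = ∅ := by
        rw [← subset_empty_iff, ← hne]
        intro w hw; exact ⟨hw.1.2, hw.2⟩
      simp [this]
  -- assemble
  have h1 : E ∩ (⋃ m : ℕ, Lset E h (t + 1 + m)) ∩ D = ⋃ m, E ∩ St m := by
    rw [← inter_iUnion, hUnion]
    have hfe : (⋃ m, f m) = (⋃ m : ℕ, Lset E h (t + 1 + m)) ∩ D := (iUnion_inter _ _).symm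
    rw [hfe, ← inter_assoc]
  calc volume (E ∩ (⋃ m : ℕ, Lset E h (t + 1 + m)) ∩ D) = volume (⋃ m, E ∩ St m) := by rw [h1]
    _ ≤ ∑' m, volume (E ∩ St m) := measure_iUnion_le _
    _ ≤ ∑' m, h (t + 1 + m) * volume (St m) := ENNReal.tsum_le_tsum hstage
    _ ≤ ∑' m, h (t + 1) * volume (St m) :=
        ENNReal.tsum_le_tsum fun m => mul_le_mul_left (hh (by omega)) _
    _ = h (t + 1) * ∑' m, volume (St m) := ENNReal.tsum_mul_left
    _ = h (t + 1) * volume (⋃ m, St m) := by rw [measure_iUnion hStdisj hStmeas]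
    _ ≤ h (t + 1) * volume D := by
        apply mul_le_mul_right
        apply measure_mono
        rw [hUnion]
        exact iUnion_subset fun m => inter_subset_right
    _ = h (t + 1) * dvol n t := by rw [hD, volume_dcube]


lemma coord_dist_le_of_mem_dcube {s : ℕ} {j : Fin n → ℤ} {y z : EuclideanSpace ℝ (Fin n)}
    (hy : y ∈ dcube n s j) (hz : z ∈ dcube n s j) (i : Fin n) :
    dist (y i) (z i) ≤ (1/2 : ℝ) ^ s := by
  rw [dcube_eq_box] at hy hz
  have h1 := hy i
  have h2 := hz i
  simp only [Set.mem_Ico] at h1 h2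
  rw [Real.dist_eq, abs_le]
  have h2s : (0:ℝ) < 2 ^ s := by positivity
  have hhalf : (1/2 : ℝ) ^ s = ((j i : ℝ) + 1) / 2 ^ s - (j i : ℝ) / 2 ^ s := by
    field_simp
    rw [← mul_pow]; norm_num
  constructor <;> nlinarith [h1.1, h1.2, h2.1, h2.2]

/-- diameter bound for dyadic cubes -/
lemma dist_le_of_mem_dcube {s : ℕ} {j : Fin n → ℤ} {y z : EuclideanSpace ℝ (Fin n)}
    (hy : y ∈ dcube n s j) (hz : z ∈ dcube n s j) :
    dist y z ≤ Real.sqrt n * (1/2) ^ s := by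
  rw [EuclideanSpace.dist_eq]
  have hcoord : ∀ i, dist (y i) (z i) ≤ (1/2 : ℝ) ^ s :=
    fun i => coord_dist_le_of_mem_dcube hy hz i
  have hsq : (∑ i, dist (y i) (z i) ^ 2) ≤ (n : ℝ) * ((1/2:ℝ)^s)^2 := by
    calc (∑ i, dist (y i) (z i) ^ 2) ≤ ∑ _i : Fin n, ((1/2:ℝ)^s)^2 := by
          apply Finset.sum_le_sum
          intro i _
          have := hcoord i
          nlinarith [dist_nonneg (x := y i) (y := z i)]
      _ = (n : ℝ) * ((1/2:ℝ)^s)^2 := by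
          rw [Finset.sum_const, Finset.card_univ, Fintype.card_fin, nsmul_eq_mul]
  calc Real.sqrt (∑ i, dist (y i) (z i) ^ 2) ≤ Real.sqrt ((n:ℝ) * ((1/2:ℝ)^s)^2) :=
        Real.sqrt_le_sqrt hsq
    _ = Real.sqrt n * (1/2)^s := by
        rw [Real.sqrt_mul (by positivity)]
        congr 1
        exact Real.sqrt_sq (by positivity)

/-- Existence of a dyadic cube with `A₁`-density at least 3/4. -/
lemma exists_good_cube (A₁ : Set (EuclideanSpace ℝ (Fin n))) (hm : MeasurableSet A₁)
    (hpos : 0 < volume A₁) (hfin : volume A₁ < ∞) :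
    ∃ (T : ℕ) (j₀ : Fin n → ℤ),
      ((3/4 : ℝ≥0) : ℝ≥0∞) * dvol n T ≤ volume (A₁ ∩ dcube n T j₀) := by
  classical
  set a := volume A₁ with ha
  -- open superset with measure < (9/8) a
  have h98 : a < ((9/8 : ℝ≥0) : ℝ≥0∞) * a := by
    have h1 : (1 : ℝ≥0∞) * a < ((9/8 : ℝ≥0) : ℝ≥0∞) * a := by
      rw [ENNReal.mul_lt_mul_iff_left hpos.ne' hfin.ne,
        show (1:ℝ≥0∞) = ((1:ℝ≥0):ℝ≥0∞) by simp, ENNReal.coe_lt_coe,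
        ← NNReal.coe_lt_coe]
      push_cast; norm_num
    simpa using h1
  obtain ⟨U, hAU, hUopen, hUvol⟩ := exists_isOpen_lt_of_lt A₁ _ h98
  -- sets of points whose ball of radius (√n+1)(1/2)^m is inside U
  set c : ℕ → ℝ := fun m => (Real.sqrt n + 1) * (1/2) ^ m with hc
  have hcpos : ∀ m, 0 < c m := by
    intro m
    have := Real.sqrt_nonneg (n : ℝ)
    positivity
  set W : ℕ → Set (EuclideanSpace ℝ (Fin n)) :=
    fun m => {z | Metric.ball z (c m) ⊆ U} with hW
  have hWmeas : ∀ m, MeasurableSet (W m) := by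
    intro m
    have hcl : IsClosed (W m) := by
      rw [← isOpen_compl_iff, Metric.isOpen_iff]
      intro z hz
      simp only [hW, mem_compl_iff, mem_setOf_eq, not_subset] at hz
      obtain ⟨w, hwball, hwU⟩ := hz
      have hwz : dist w z < c m := Metric.mem_ball.1 hwball
      refine ⟨c m - dist w z, by linarith, ?_⟩
      intro z' hz'
      have hzz' : dist z' z < c m - dist w z := Metric.mem_ball.1 hz'
      simp only [mem_compl_iff, hW, mem_setOf_eq, not_subset]
      refine ⟨w, Metric.mem_ball.2 ?_, hwU⟩
      calc dist w z' ≤ dist w z + dist z z' := dist_triangle _ _ _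
        _ < c m := by rw [dist_comm z z']; linarith
    exact hcl.measurableSet
  have hWmono : Monotone (fun m => A₁ ∩ W m) := by
    intro m m' hmm
    apply inter_subset_inter_right
    intro z hz
    refine Subset.trans (Metric.ball_subset_ball ?_) hz
    have h0 : (0:ℝ) ≤ Real.sqrt n + 1 := by positivity
    apply mul_le_mul_of_nonneg_left _ h0
    apply pow_le_pow_of_le_one (by norm_num) (by norm_num) hmm
  have hWcover : A₁ ⊆ ⋃ m, W m := by
    intro z hz
    have hzU : z ∈ U := hAU hz
    obtain ⟨δ, hδ, hball⟩ := Metric.isOpen_iff.1 hUopen z hzU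
    have hex : ∃ m : ℕ, c m < δ := by
      obtain ⟨m, hm⟩ := exists_pow_lt_of_lt_one (x := δ / (Real.sqrt n + 1)) (y := (1/2 : ℝ))
        (by positivity) (by norm_num)
      rw [lt_div_iff₀ (by positivity)] at hm
      exact ⟨m, by rw [hc]; nlinarith⟩
    obtain ⟨m, hm⟩ := hex
    exact mem_iUnion.2 ⟨m, fun w hw =>
      hball (Metric.mem_ball.2 ((Metric.mem_ball.1 hw).trans hm))⟩
  -- pick T with volume (A₁ ∩ W T) > (7/8) a
  have htendsto : Tendsto (fun m => volume (A₁ ∩ W m)) atTop (𝓝 (volume (⋃ m, A₁ ∩ W m))) :=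
    tendsto_measure_iUnion_atTop hWmono
  have hUnionEq : volume (⋃ m, A₁ ∩ W m) = a := by
    rw [← inter_iUnion]
    refine le_antisymm (measure_mono inter_subset_left) (measure_mono ?_)
    intro z hz; exact ⟨hz, hWcover hz⟩
  rw [hUnionEq] at htendsto
  have hlt78 : ((7/8 : ℝ≥0) : ℝ≥0∞) * a < a := by
    nth_rewrite 2 [show a = 1 * a by simp]
    rw [ENNReal.mul_lt_mul_iff_left hpos.ne' hfin.ne,
      show (1:ℝ≥0∞) = ((1:ℝ≥0):ℝ≥0∞) by simp, ENNReal.coe_lt_coe, ← NNReal.coe_lt_coe]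
    push_cast; norm_num
  obtain ⟨T, hT⟩ := (htendsto.eventually_const_lt hlt78).exists
  -- the union of the good cubes
  by_contra hcon
  push_neg at hcon
  set Good : Set (Fin n → ℤ) := {j | dcube n T j ⊆ U} with hGood
  set GU : Set (EuclideanSpace ℝ (Fin n)) := ⋃ j ∈ Good, dcube n T j with hGU
  have hGUmeas : MeasurableSet GU :=
    MeasurableSet.biUnion (to_countable _) (fun j _ => measurableSet_dcube T j)
  -- A₁ ∩ W T ⊆ GU
  have hWsub : A₁ ∩ W T ⊆ GU := by
    rintro z ⟨hzA, hzW⟩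
    have hzc : z ∈ dcube n T (didx n T z) := mem_dcube_didx T z
    refine mem_iUnion₂.2 ⟨didx n T z, ?_, hzc⟩
    intro w hw
    apply hzW
    rw [Metric.mem_ball]
    calc dist w z ≤ Real.sqrt n * (1/2) ^ T := dist_le_of_mem_dcube hw hzc
      _ < c T := by
          rw [hc]
          have : (0:ℝ) < (1/2:ℝ)^T := by positivity
          nlinarith
  -- mass of A₁ inside GU is ≤ (3/4) * vol U
  have hGUbound : volume (A₁ ∩ GU) ≤ ((3/4 : ℝ≥0) : ℝ≥0∞) * volume U := by
    have h1 : A₁ ∩ GU = ⋃ j ∈ Good, (A₁ ∩ dcube n T j) := by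
      rw [hGU, inter_iUnion₂]
    rw [h1, measure_biUnion (to_countable _)]
    · have h2 : volume GU = ∑' j : Good, volume (dcube n T (j : Fin n → ℤ)) := by
        rw [hGU, measure_biUnion (to_countable _)]
        · exact fun j _ j' _ hne => dcube_disjoint T hne
        · exact fun j _ => measurableSet_dcube T j
      calc (∑' j : Good, volume (A₁ ∩ dcube n T (j : Fin n → ℤ)))
          ≤ ∑' j : Good, ((3/4 : ℝ≥0) : ℝ≥0∞) * volume (dcube n T (j : Fin n → ℤ)) := by
            apply ENNReal.tsum_le_tsum
            intro j
            rw [volume_dcube]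
            exact le_of_lt (hcon T j)
        _ = ((3/4 : ℝ≥0) : ℝ≥0∞) * volume GU := by rw [ENNReal.tsum_mul_left, ← h2]
        _ ≤ ((3/4 : ℝ≥0) : ℝ≥0∞) * volume U := by
            apply mul_le_mul_right
            apply measure_mono
            rw [hGU]
            exact iUnion₂_subset fun j hj => hj
    · intro j _ j' _ hne
      exact (dcube_disjoint T hne).mono inter_subset_right inter_subset_right
    · exact fun j _ => hm.inter (measurableSet_dcube T j)
  -- the complement part
  have hcompl : volume (A₁ \ GU) ≤ ((1/8 : ℝ≥0) : ℝ≥0∞) * a := by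
    have hsub : A₁ \ GU ⊆ A₁ \ W T := by
      intro z hz
      exact ⟨hz.1, fun hzW => hz.2 (hWsub ⟨hz.1, hzW⟩)⟩
    have h2 : volume (A₁ \ W T) + volume (A₁ ∩ W T) = a := by
      rw [ha, add_comm]
      exact measure_inter_add_diff A₁ (hWmeas T)
    have h3 : volume (A₁ \ W T) ≤ ((1/8 : ℝ≥0) : ℝ≥0∞) * a := by
      by_contra hcon2
      push_neg at hcon2
      have : ((1/8 : ℝ≥0) : ℝ≥0∞) * a + ((7/8 : ℝ≥0) : ℝ≥0∞) * a
          < volume (A₁ \ W T) + volume (A₁ ∩ W T) :=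
        ENNReal.add_lt_add hcon2 hT
      rw [h2, ← add_mul, ← ENNReal.coe_add] at this
      have h18 : ((1/8 : ℝ≥0) + (7/8 : ℝ≥0)) = 1 := by
        rw [← NNReal.coe_inj]; push_cast; norm_num
      rw [h18] at this
      simp at this
    exact le_trans (measure_mono hsub) h3
  -- combine
  have hsplit : a ≤ volume (A₁ ∩ GU) + volume (A₁ \ GU) := by
    rw [ha]
    conv_lhs => rw [← inter_union_diff A₁ GU]
    exact measure_union_le _ _
  have hfinal : a ≤ (((3/4 : ℝ≥0) * (9/8 : ℝ≥0) + (1/8 : ℝ≥0) : ℝ≥0) : ℝ≥0∞) * a := by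
    calc a ≤ volume (A₁ ∩ GU) + volume (A₁ \ GU) := hsplit
      _ ≤ ((3/4 : ℝ≥0) : ℝ≥0∞) * volume U + ((1/8 : ℝ≥0) : ℝ≥0∞) * a :=
          add_le_add hGUbound hcompl
      _ ≤ ((3/4 : ℝ≥0) : ℝ≥0∞) * (((9/8 : ℝ≥0) : ℝ≥0∞) * a) + ((1/8 : ℝ≥0) : ℝ≥0∞) * a :=
          add_le_add_left (mul_le_mul_right (le_of_lt hUvol) _) _
      _ = (((3/4 : ℝ≥0) * (9/8 : ℝ≥0) + (1/8 : ℝ≥0) : ℝ≥0) : ℝ≥0∞) * a := by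
          push_cast
          ring
  have hlt1 : (((3/4 : ℝ≥0) * (9/8 : ℝ≥0) + (1/8 : ℝ≥0) : ℝ≥0) : ℝ≥0∞) < 1 := by
    rw [show (1:ℝ≥0∞) = ((1:ℝ≥0):ℝ≥0∞) by simp, ENNReal.coe_lt_coe, ← NNReal.coe_lt_coe]
    push_cast; norm_num
  have : a < a := by
    calc a ≤ (((3/4 : ℝ≥0) * (9/8 : ℝ≥0) + (1/8 : ℝ≥0) : ℝ≥0) : ℝ≥0∞) * a := hfinal
      _ < 1 * a := by rw [ENNReal.mul_lt_mul_iff_left hpos.ne' hfin.ne]; exact hlt1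
      _ = a := one_mul a
  exact absurd this (lt_irrefl a)

lemma coord_dist_le (x y : EuclideanSpace ℝ (Fin n)) (i : Fin n) :
    dist (x i) (y i) ≤ dist x y := by
  rw [EuclideanSpace.dist_eq]
  have h1 : dist (x i) (y i) ^ 2 ≤ ∑ i', dist (x i') (y i') ^ 2 := by
    apply Finset.single_le_sum (f := fun i' => dist (x i') (y i') ^ 2)
    · intro i' _; positivity
    · exact Finset.mem_univ i
  calc dist (x i) (y i) = Real.sqrt (dist (x i) (y i) ^ 2) :=
        (Real.sqrt_sq dist_nonneg).symm
    _ ≤ Real.sqrt (∑ i', dist (x i') (y i') ^ 2) := Real.sqrt_le_sqrt h1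

lemma dvol_ne_zero (n s : ℕ) : dvol n s ≠ 0 := by
  rw [dvol_def]
  apply pow_ne_zero
  simp only [ne_eq, ENNReal.ofReal_eq_zero, not_le]
  positivity


end Stmt6

open Stmt6 in
/-- Density lemma: inside a set of positive measure there is a non-empty compact set with
uniform lower density bounds at the scales `r k`. -/
theorem stmt6 (n : ℕ) (r ε : ℕ → ℝ)
    (hrpos : ∀ k, 0 < r k) (hεpos : ∀ k, 0 < ε k)
    (hrmono : Antitone r) (hεmono : Antitone ε)
    (hr0 : Tendsto r atTop (𝓝 0)) (hε0 : Tendsto ε atTop (𝓝 0))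
    (hsum : Summable ε)
    (A₀ : Set (EuclideanSpace ℝ (Fin n))) (hA₀ : MeasurableSet A₀) (hpos : 0 < volume A₀) :
    ∃ A : Set (EuclideanSpace ℝ (Fin n)), A.Nonempty ∧ IsCompact A ∧ A ⊆ closure A₀ ∧
      ∃ k₀ : ℕ, ∀ k ≥ k₀, ∀ x ∈ A,
        ENNReal.ofReal ((2 * r k) ^ n * ε k) ≤
          volume (A ∩ {y : EuclideanSpace ℝ (Fin n) | ∀ i, y i ∈ Icc (x i - r k) (x i + r k)}) := by
  classical
  -- Step 0: a bounded positive-measure piece of A₀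
  obtain ⟨M, hM⟩ : ∃ M : ℕ, 0 < volume (A₀ ∩ Metric.ball 0 M) := by
    by_contra hcon
    push_neg at hcon
    simp only [le_zero_iff] at hcon
    have hcover : A₀ = ⋃ M : ℕ, A₀ ∩ Metric.ball 0 M := by
      ext z
      simp only [mem_iUnion, mem_inter_iff, Metric.mem_ball]
      constructor
      · intro hz
        obtain ⟨M, hMz⟩ := exists_nat_gt (dist z 0)
        exact ⟨M, hz, hMz⟩
      · rintro ⟨M, hz, _⟩; exact hz
    have : volume A₀ = 0 := by
      rw [hcover]
      exact measure_iUnion_null (fun M => hcon M)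
    exact absurd this hpos.ne'
  set A₁ := A₀ ∩ Metric.ball 0 M with hA₁
  have hA₁m : MeasurableSet A₁ := hA₀.inter Metric.isOpen_ball.measurableSet
  have hA₁fin : volume A₁ < ∞ :=
    lt_of_le_of_lt (measure_mono inter_subset_right) measure_ball_lt_top
  -- Step 1: good cube
  obtain ⟨T, j₀, hQ₀⟩ := exists_good_cube A₁ hA₁m hM hA₁fin
  set Q₀ := dcube n T j₀ with hQ₀def
  -- Step 2: E = closure A₀
  set E := closure A₀ with hEdef
  have hE : MeasurableSet E := isClosed_closure.measurableSet
  have hEQ : ((3/4 : ℝ≥0) : ℝ≥0∞) * dvol n T ≤ volume (E ∩ Q₀) := by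
    refine le_trans hQ₀ (measure_mono (inter_subset_inter_left _ ?_))
    exact inter_subset_left.trans subset_closure
  -- Step 3: choice of k₀
  have htail : ∃ k₁ : ℕ, ∀ i ≥ k₁, (∑' m : ℕ, ε (m + i)) ≤ (1/4) * ((8:ℝ)^n)⁻¹ := by
    have hev : ∀ᶠ i in atTop, (∑' m : ℕ, ε (m + i)) < (1/4) * ((8:ℝ)^n)⁻¹ :=
      (tendsto_sum_nat_add ε).eventually_lt_const (by positivity)
    rw [eventually_atTop] at hev
    obtain ⟨k₁, hk₁'⟩ := hev
    exact ⟨k₁, fun i hi => (hk₁' i hi).le⟩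
  obtain ⟨k₁, hk₁⟩ := htail
  have hscale : ∃ k₂ : ℕ, ∀ k ≥ k₂, r k < (1/2 : ℝ) ^ (T + 1) := by
    have hev := hr0.eventually (gt_mem_nhds (show (0:ℝ) < (1/2:ℝ)^(T+1) by positivity))
    rw [eventually_atTop] at hev
    exact hev
  obtain ⟨k₂, hk₂⟩ := hscale
  set k₀ := max k₁ k₂ with hk₀def
  -- the scale-selection function
  have hex : ∀ k : ℕ, ∃ t : ℕ, (1/2 : ℝ) ^ t < r k / 2 := by
    intro k
    exact exists_pow_lt_of_lt_one (by have := hrpos k; positivity) (by norm_num)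
  set tk : ℕ → ℕ := fun k => Nat.find (hex k) with htkdef
  have htk1 : ∀ k, (1/2 : ℝ) ^ (tk k) < r k / 2 := fun k => Nat.find_spec (hex k)
  have htkT : ∀ k ≥ k₀, T + 2 ≤ tk k := by
    intro k hk
    rw [htkdef]
    rw [Nat.le_find_iff]
    intro t ht hcon
    have h1 : r k < (1/2:ℝ)^(T+1) := hk₂ k (le_trans (le_max_right _ _) hk)
    have h2 : (1/2:ℝ)^t ≥ (1/2:ℝ)^(T+1) := by
      apply pow_le_pow_of_le_one (by norm_num) (by norm_num)
      omega
    have hc : (0:ℝ) < (1/2:ℝ)^(T+1) := by positivity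
    linarith
  have htk2 : ∀ k ≥ k₀, r k ≤ 4 * (1/2 : ℝ) ^ (tk k) := by
    intro k hk
    have h1 : 1 ≤ tk k := le_trans (by omega) (htkT k hk)
    have hmin := Nat.find_min (hex k) (show tk k - 1 < tk k by omega)
    push_neg at hmin
    have heq : (1/2:ℝ) ^ (tk k) = (1/2:ℝ) ^ (tk k - 1) * (1/2) := by
      rw [← pow_succ]
      congr 1
      omega
    rw [heq]
    linarith
  -- Step 4: the threshold function h
  set F : ℕ → ℝ≥0∞ := fun k => ENNReal.ofReal ((8:ℝ)^n * ε k) with hFdef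
  set h : ℕ → ℝ≥0∞ := fun t => ∑' m : ℕ, if t ≤ tk (m + k₀) then F (m + k₀) else 0 with hhdef
  have hh : Antitone h := by
    intro t t' htt'
    apply ENNReal.tsum_le_tsum
    intro m
    by_cases hc : t' ≤ tk (m + k₀)
    · rw [if_pos hc, if_pos (le_trans htt' hc)]
    · rw [if_neg hc]
      exact zero_le
  have hsmall : ∀ t, h t ≤ ENNReal.ofReal (1/4) := by
    intro t
    have h1 : h t ≤ ∑' m : ℕ, F (m + k₀) := by
      apply ENNReal.tsum_le_tsum
      intro m
      split_ifs
      · exact le_rfl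
      · exact zero_le
    have hsummable : Summable (fun m : ℕ => (8:ℝ)^n * ε (m + k₀)) := by
      apply Summable.mul_left
      exact (summable_nat_add_iff k₀).2 hsum
    have h2 : (∑' m : ℕ, F (m + k₀)) = ENNReal.ofReal (∑' m : ℕ, (8:ℝ)^n * ε (m + k₀)) := by
      rw [ENNReal.ofReal_tsum_of_nonneg]
      · intro m
        have := (hεpos (m + k₀)).le
        positivity
      · exact hsummable
    rw [h2] at h1
    refine le_trans h1 (ENNReal.ofReal_le_ofReal ?_)
    rw [tsum_mul_left]
    have h3 : (∑' m : ℕ, ε (m + k₀)) ≤ (1/4) * ((8:ℝ)^n)⁻¹ :=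
      hk₁ k₀ (le_max_left _ _)
    have h4 : (0:ℝ) < (8:ℝ)^n := by positivity
    calc (8:ℝ)^n * (∑' m : ℕ, ε (m + k₀)) ≤ (8:ℝ)^n * ((1/4) * ((8:ℝ)^n)⁻¹) := by
          apply mul_le_mul_of_nonneg_left h3 h4.le
      _ = 1/4 := by field_simp
  have hne_top : ∀ t, h t ≠ ∞ :=
    fun t => (lt_of_le_of_lt (hsmall t) ENNReal.ofReal_lt_top).ne
  have hsplit : ∀ k, k₀ ≤ k → h (tk k + 1) + F k ≤ h (tk k) := by
    intro k hk
    have hterm : ∀ m : ℕ,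
        (if tk k + 1 ≤ tk (m + k₀) then F (m + k₀) else 0)
          + (if tk (m + k₀) = tk k then F (m + k₀) else 0)
        = (if tk k ≤ tk (m + k₀) then F (m + k₀) else 0) := by
      intro m
      by_cases h1 : tk (m + k₀) = tk k
      · rw [if_pos h1, if_neg (by omega), if_pos (by omega), zero_add]
      · by_cases h2 : tk k + 1 ≤ tk (m + k₀)
        · rw [if_pos h2, if_neg h1, if_pos (by omega), add_zero]
        · rw [if_neg h2, if_neg h1, if_neg (by omega), add_zero]
    calc h (tk k + 1) + F k
        ≤ h (tk k + 1) + ∑' m : ℕ, (if tk (m + k₀) = tk k then F (m + k₀) else 0) := by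
          apply add_le_add_right
          have hidx : k - k₀ + k₀ = k := Nat.sub_add_cancel hk
          have hFk : F k = (fun m : ℕ => if tk (m + k₀) = tk k then F (m + k₀) else 0)
              (k - k₀) := by
            show F k = if tk (k - k₀ + k₀) = tk k then F (k - k₀ + k₀) else 0
            rw [hidx, if_pos rfl]
          rw [hFk]
          exact ENNReal.le_tsum _
      _ = ∑' m : ℕ, ((if tk k + 1 ≤ tk (m + k₀) then F (m + k₀) else 0)
            + (if tk (m + k₀) = tk k then F (m + k₀) else 0)) := by
          rw [ENNReal.tsum_add]
      _ = h (tk k) := by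
          rw [hhdef]
          exact tsum_congr hterm
  -- Step 5: removal and the final set
  set R : Set (EuclideanSpace ℝ (Fin n)) := ⋃ m : ℕ, Lset E h (T + 1 + m) with hRdef
  have hRmeas : MeasurableSet R := MeasurableSet.iUnion fun m => measurableSet_Lset E h _
  set Et : Set (EuclideanSpace ℝ (Fin n)) := (E ∩ Q₀) \ R with hEtdef
  have hEtmeas : MeasurableSet Et := (hE.inter (measurableSet_dcube T j₀)).diff hRmeas
  set A : Set (EuclideanSpace ℝ (Fin n)) := closure Et with hAdef
  -- A ⊆ closure A₀
  have hAsub : A ⊆ closure A₀ := by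
    have h1 : Et ⊆ E := fun z hz => hz.1.1
    calc A ⊆ closure E := closure_mono h1
      _ = E := isClosed_closure.closure_eq
  -- compactness
  have hcorner : (WithLp.toLp 2 (fun i => (j₀ i : ℝ) / 2 ^ T) : EuclideanSpace ℝ (Fin n)) ∈ Q₀ := by
    rw [hQ₀def, mem_dcube_iff]
    intro i
    have h2 : (2:ℝ) ^ T ≠ 0 := by positivity
    show ⌊(2:ℝ) ^ T * ((j₀ i : ℝ) / 2 ^ T)⌋ = j₀ i
    rw [mul_div_cancel₀ _ h2, Int.floor_intCast]
  have hQbounded : Bornology.IsBounded Q₀ := by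
    have hsubB : Q₀ ⊆ Metric.closedBall
        (WithLp.toLp 2 (fun i => (j₀ i : ℝ) / 2 ^ T) : EuclideanSpace ℝ (Fin n))
        (Real.sqrt n * (1/2) ^ T) := by
      intro z hz
      rw [Metric.mem_closedBall]
      exact dist_le_of_mem_dcube hz hcorner
    exact Metric.isBounded_closedBall.subset hsubB
  have hAcompact : IsCompact A := by
    apply Metric.isCompact_of_isClosed_isBounded isClosed_closure
    exact ((hQbounded.subset (fun z hz => hz.1.2)).closure)
  -- key bound at the top cube
  have hR_T : volume (E ∩ R ∩ Q₀) ≤ h (T + 1) * dvol n T :=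
    key_lemma E h hE hh T j₀
  -- nonemptiness
  have hEtpos : volume Et ≠ 0 := by
    intro h0
    have hcover : E ∩ Q₀ ⊆ Et ∪ (E ∩ R ∩ Q₀) := by
      intro z hz
      by_cases hzR : z ∈ R
      · exact Or.inr ⟨⟨hz.1, hzR⟩, hz.2⟩
      · exact Or.inl ⟨hz, hzR⟩
    have h1 : volume (E ∩ Q₀) ≤ volume Et + volume (E ∩ R ∩ Q₀) :=
      le_trans (measure_mono hcover) (measure_union_le _ _)
    rw [h0, zero_add] at h1
    have h2 : ((3/4:ℝ≥0):ℝ≥0∞) * dvol n T ≤ ENNReal.ofReal (1/4) * dvol n T :=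
      le_trans hEQ (le_trans h1 (le_trans hR_T (mul_le_mul_left (hsmall _) _)))
    rw [ENNReal.mul_le_mul_iff_left (dvol_ne_zero n T) (dvol_ne_top n T)] at h2
    have h3 : ENNReal.ofReal (1/4) < ((3/4:ℝ≥0):ℝ≥0∞) := by
      rw [ENNReal.ofReal, ENNReal.coe_lt_coe, ← NNReal.coe_lt_coe,
        Real.coe_toNNReal _ (by norm_num : (0:ℝ) ≤ 1/4)]
      push_cast; norm_num
    exact absurd h2 (not_le.2 h3)
  have hAne : A.Nonempty := (nonempty_of_measure_ne_zero hEtpos).mono subset_closure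
  -- main estimate
  refine ⟨A, hAne, hAcompact, hAsub, k₀, ?_⟩
  intro k hk x hx
  set t := tk k with ht
  have hrk2 : (0:ℝ) < r k / 2 := by have := hrpos k; positivity
  obtain ⟨y, hyEt, hxy⟩ := Metric.mem_closure_iff.1 hx (r k / 2) hrk2
  set D := dcube n t (didx n t y) with hDdef
  have hyD : y ∈ D := mem_dcube_didx t y
  have hyQ : y ∈ Q₀ := hyEt.1.2
  have hyR : y ∉ R := hyEt.2
  have hTt : T ≤ t := by have := htkT k hk; omega
  have hDQ : D ⊆ Q₀ := dcube_subset hTt hyD hyQ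
  -- the certificate at scale t
  have hcert : h t * dvol n t ≤ volume (E ∩ D) := by
    by_contra hcon
    push_neg at hcon
    apply hyR
    refine mem_iUnion.2 ⟨t - (T+1), ?_⟩
    have hidx : T + 1 + (t - (T+1)) = t := by have := htkT k hk; omega
    rw [hidx]
    exact (mem_Lset_iff E h).2 hcon
  -- the removed mass inside D
  have hERD : volume (E ∩ R ∩ D) ≤ h (t + 1) * dvol n t := by
    have hsub : E ∩ R ∩ D ⊆ E ∩ (⋃ m : ℕ, Lset E h (t + 1 + m)) ∩ D := by
      rintro z ⟨⟨hzE, hzR⟩, hzD⟩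
      refine ⟨⟨hzE, ?_⟩, hzD⟩
      obtain ⟨m', hm'⟩ := mem_iUnion.1 hzR
      by_cases hst : T + 1 + m' ≤ t
      · exfalso
        have hzc : z ∈ dcube n (T + 1 + m') (didx n (T + 1 + m') z) :=
          mem_dcube_didx (T + 1 + m') z
        have hlow : volume (E ∩ dcube n (T + 1 + m') (didx n (T + 1 + m') z)) <
            h (T + 1 + m') * dvol n (T + 1 + m') := (mem_Lset_iff E h).1 hm'
        have hDC : D ⊆ dcube n (T + 1 + m') (didx n (T + 1 + m') z) :=
          dcube_subset hst hzD hzc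
        exact hyR (mem_iUnion.2 ⟨m', dcube_subset_Lset E h hlow (hDC hyD)⟩)
      · push_neg at hst
        refine mem_iUnion.2 ⟨T + 1 + m' - (t+1), ?_⟩
        have hidx2 : t + 1 + (T + 1 + m' - (t+1)) = T + 1 + m' := by omega
        rw [hidx2]
        exact hm'
    exact le_trans (measure_mono hsub) (key_lemma E h hE hh t (didx n t y))
  -- combine
  have hED : volume (E ∩ D) ≤ volume (Et ∩ D) + volume (E ∩ R ∩ D) := by
    have hcov : E ∩ D ⊆ (Et ∩ D) ∪ (E ∩ R ∩ D) := by
      rintro z ⟨hzE, hzD⟩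
      by_cases hzR : z ∈ R
      · exact Or.inr ⟨⟨hzE, hzR⟩, hzD⟩
      · exact Or.inl ⟨⟨⟨hzE, hDQ hzD⟩, hzR⟩, hzD⟩
    exact le_trans (measure_mono hcov) (measure_union_le _ _)
  have hchain : h (t+1) * dvol n t + F k * dvol n t
      ≤ h (t+1) * dvol n t + volume (Et ∩ D) := by
    calc h (t+1) * dvol n t + F k * dvol n t = (h (t+1) + F k) * dvol n t :=
          (add_mul _ _ _).symm
      _ ≤ h t * dvol n t := mul_le_mul_left (hsplit k hk) _
      _ ≤ volume (E ∩ D) := hcert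
      _ ≤ volume (Et ∩ D) + volume (E ∩ R ∩ D) := hED
      _ ≤ volume (Et ∩ D) + h (t+1) * dvol n t := add_le_add_right hERD _
      _ = h (t+1) * dvol n t + volume (Et ∩ D) := add_comm _ _
  have hFbound : F k * dvol n t ≤ volume (Et ∩ D) := by
    have hfin2 : h (t+1) * dvol n t ≠ ∞ := ENNReal.mul_ne_top (hne_top _) (dvol_ne_top n t)
    exact (ENNReal.add_le_add_iff_left hfin2).1 hchain
  -- inclusion into the target set
  have hsubT : Et ∩ D ⊆
      A ∩ {y' : EuclideanSpace ℝ (Fin n) | ∀ i, y' i ∈ Icc (x i - r k) (x i + r k)} := by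
    rintro z ⟨hzEt, hzD⟩
    refine ⟨subset_closure hzEt, ?_⟩
    intro i
    have h1 : dist (z i) (y i) ≤ (1/2:ℝ)^t := coord_dist_le_of_mem_dcube hzD hyD i
    have h2 : dist (y i) (x i) ≤ dist x y := by
      rw [dist_comm (y i) (x i)]
      exact coord_dist_le x y i
    have h3 : dist (z i) (x i) < r k := by
      calc dist (z i) (x i) ≤ dist (z i) (y i) + dist (y i) (x i) := dist_triangle _ _ _
        _ ≤ (1/2:ℝ)^t + dist x y := add_le_add h1 h2
        _ < r k / 2 + r k / 2 := by
            have := htk1 k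
            exact add_lt_add (lt_of_le_of_lt (le_refl _) (by rw [ht]; exact htk1 k)) hxy
        _ = r k := by ring
    rw [Real.dist_eq, abs_lt] at h3
    constructor <;> [linarith; linarith]
  -- final numeric comparison
  calc ENNReal.ofReal ((2 * r k) ^ n * ε k) ≤ F k * dvol n t := by
        rw [hFdef, dvol_def]
        rw [← ENNReal.ofReal_pow (by positivity),
          ← ENNReal.ofReal_mul (mul_nonneg (by positivity) (hεpos k).le)]
        apply ENNReal.ofReal_le_ofReal
        have h8 : (8:ℝ)^n * ε k * ((((2:ℝ)^t)⁻¹)^n) = (8 * ((2:ℝ)^t)⁻¹)^n * ε k := by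
          rw [mul_pow]; ring
        rw [h8]
        have h9 : (2 * r k) ^ n * ε k = ε k * (2 * r k) ^ n := by ring
        rw [h9, mul_comm ((8 * ((2:ℝ)^t)⁻¹)^n) (ε k)]
        apply mul_le_mul_of_nonneg_left _ (hεpos k).le
        apply pow_le_pow_left₀ (by have := (hrpos k).le; positivity)
        have hhalf : (1/2:ℝ)^t = ((2:ℝ)^t)⁻¹ := by
          rw [one_div, inv_pow]
        have h10 := htk2 k hk
        rw [ht] at *
        rw [← hhalf]
        linarith
    _ ≤ volume (Et ∩ D) := hFbound
    _ ≤ volume (A ∩ {y' : EuclideanSpace ℝ (Fin n) |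
          ∀ i, y' i ∈ Icc (x i - r k) (x i + r k)}) := measure_mono hsubT
end

section
/- Let B ⊆ ℝ^n be a set containing a line segment in every direction belonging to a set of directions of positive outer (n−1)-dimensional Lebesgue measure. Then there exists a compact set E ⊆ ℝ^n with dim_H(E) ≤ dim_H(B) that contains a line segment in every direction of some compact set of directions of positive (n−1)-dimensional measure; moreover there is a line such that the orthogonal projection of each such segment to this line has length at least some fixed positive constant. -/
open Set Filter MeasureTheory Metric Bornology
open scoped ENNReal NNReal Topology Pointwise

lemma add_rpow_le_two_rpow (x y : ℝ≥0∞) {s : ℝ} (hs : 0 ≤ s) :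
    (x + y) ^ s ≤ 2 ^ s * (x ^ s + y ^ s) := by
  calc (x+y)^s ≤ (2 * max x y)^s := by
        apply ENNReal.rpow_le_rpow _ hs
        rw [two_mul]
        exact add_le_add (le_max_left x y) (le_max_right x y)
    _ = 2^s * (max x y)^s := ENNReal.mul_rpow_of_nonneg _ _ hs
    _ ≤ 2^s * (x^s + y^s) := by
        gcongr
        rcases max_cases x y with ⟨h,_⟩|⟨h,_⟩ <;> rw [h] <;> simp

lemma cover_open {X : Type*} [MetricSpace X] [MeasurableSpace X] [BorelSpace X] {s : ℝ}
    (hs : 1 ≤ s) (A : Set X) (h : μH[s] A = 0) {ε : ℝ≥0∞} (hε : 0 < ε) {r : ℝ} (hr : 0 < r) :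
    ∃ V : ℕ → Set X, (∀ i, IsOpen (V i)) ∧ A ⊆ ⋃ i, V i ∧
      (∀ i, EMetric.diam (V i) ≤ ENNReal.ofReal r) ∧ ∑' i, EMetric.diam (V i) ^ s ≤ ε := by
  have hs0 : (0:ℝ) < s := lt_of_lt_of_le one_pos hs
  have h2s : (2:ℝ≥0∞) ^ s ≠ ∞ := (ENNReal.rpow_lt_top_of_nonneg hs0.le (by norm_num)).ne
  set ε' : ℝ≥0∞ := ε / (2 * 2 ^ s) with hε'def
  have hε'0 : 0 < ε' := ENNReal.div_pos hε.ne' (by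
    exact ENNReal.mul_ne_top (by norm_num) h2s)
  -- extract a cover of A at scale r/2 with small sum
  have h0 : (⨅ (t : ℕ → Set X) (_ : A ⊆ ⋃ n, t n)
      (_ : ∀ n, EMetric.diam (t n) ≤ ENNReal.ofReal (r/2)),
      ∑' n, ⨆ _ : (t n).Nonempty, EMetric.diam (t n) ^ s) = 0 := by
    refine le_antisymm ?_ zero_le
    rw [← h, MeasureTheory.Measure.hausdorffMeasure_apply]
    exact le_iSup₂ (f := fun r' (_ : 0 < r') => ⨅ (t : ℕ → Set X) (_ : A ⊆ ⋃ n, t n)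
      (_ : ∀ n, EMetric.diam (t n) ≤ r'), ∑' n, ⨆ _ : (t n).Nonempty, EMetric.diam (t n) ^ s)
      (ENNReal.ofReal (r/2)) (by simp [hr, half_pos])
  have hlt : (⨅ (t : ℕ → Set X) (_ : A ⊆ ⋃ n, t n)
      (_ : ∀ n, EMetric.diam (t n) ≤ ENNReal.ofReal (r/2)),
      ∑' n, ⨆ _ : (t n).Nonempty, EMetric.diam (t n) ^ s) < ε' := h0 ▸ hε'0
  rw [iInf_lt_iff] at hlt
  obtain ⟨t, hlt⟩ := hlt
  rw [iInf_lt_iff] at hlt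
  obtain ⟨htA, hlt⟩ := hlt
  rw [iInf_lt_iff] at hlt
  obtain ⟨htd, hts⟩ := hlt
  -- radii
  set c : ℕ → ℝ≥0∞ := fun i => min (ENNReal.ofReal (r/2)) (min 1 (ε' * 2⁻¹ ^ (i+1))) with hc
  have hc0 : ∀ i, 0 < c i := fun i => by
    refine lt_min (by simp [hr, half_pos]) (lt_min one_pos ?_)
    exact ENNReal.mul_pos hε'0.ne' (by simp)
  have hcne : ∀ i, c i ≠ ∞ := fun i =>
    (lt_of_le_of_lt ((min_le_right _ _).trans (min_le_left _ _)) ENNReal.one_lt_top).ne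
  set ρ : ℕ → ℝ≥0 := fun i => (c i).toNNReal / 2 with hρ
  have hρ0 : ∀ i, 0 < ρ i := fun i => by
    have := ENNReal.toNNReal_pos (hc0 i).ne' (hcne i)
    positivity
  have h2ρ : ∀ i, 2 * (ρ i : ℝ≥0∞) = c i := fun i => by
    have hcast : ((ρ i : ℝ≥0∞)) = ((c i).toNNReal : ℝ≥0∞) / 2 := by
      rw [hρ]; exact ENNReal.coe_div (by norm_num)
    rw [hcast, ENNReal.mul_div_cancel' (by norm_num) (by norm_num),
      ENNReal.coe_toNNReal (hcne i)]
  refine ⟨fun i => Metric.thickening (ρ i) (t i), fun i => Metric.isOpen_thickening, ?_, ?_, ?_⟩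
  · exact htA.trans (iUnion_mono fun i => Metric.self_subset_thickening (by exact_mod_cast hρ0 i) _)
  · intro i
    calc EMetric.diam (Metric.thickening (ρ i) (t i)) ≤ EMetric.diam (t i) + 2 * ρ i :=
          Metric.ediam_thickening_le _
      _ ≤ ENNReal.ofReal (r/2) + ENNReal.ofReal (r/2) := by
          refine add_le_add (htd i) ?_
          rw [h2ρ]
          exact (min_le_left _ _)
      _ = ENNReal.ofReal r := by rw [← ENNReal.ofReal_add (by linarith) (by linarith)]; norm_num
  · have hterm : ∀ i, EMetric.diam (Metric.thickening (ρ i) (t i)) ^ s ≤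
        2 ^ s * ((⨆ _ : (t i).Nonempty, EMetric.diam (t i) ^ s) + (c i) ^ s) := by
      intro i
      rcases eq_empty_or_nonempty (t i) with he | hne
      · rw [he, Metric.thickening_empty]
        simp only [EMetric.diam, Metric.ediam_empty]
        rw [ENNReal.zero_rpow_of_pos hs0]
        exact zero_le
      · rw [iSup_pos hne]
        calc EMetric.diam (Metric.thickening (ρ i) (t i)) ^ s
            ≤ (EMetric.diam (t i) + 2 * ρ i) ^ s :=
              ENNReal.rpow_le_rpow (Metric.ediam_thickening_le _) hs0.le
          _ = (EMetric.diam (t i) + c i) ^ s := by rw [h2ρ]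
          _ ≤ 2 ^ s * (EMetric.diam (t i) ^ s + (c i) ^ s) := add_rpow_le_two_rpow _ _ hs0.le
    calc ∑' i, EMetric.diam (Metric.thickening (ρ i) (t i)) ^ s
        ≤ ∑' i, 2 ^ s * ((⨆ _ : (t i).Nonempty, EMetric.diam (t i) ^ s) + (c i) ^ s) :=
          ENNReal.tsum_le_tsum hterm
      _ = 2 ^ s * ((∑' i, ⨆ _ : (t i).Nonempty, EMetric.diam (t i) ^ s) + ∑' i, (c i) ^ s) := by
          rw [ENNReal.tsum_mul_left, ENNReal.tsum_add]
      _ ≤ 2 ^ s * (ε' + ε') := by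
          gcongr 2 ^ s * (?_ + ?_)
          case h₂ =>
            calc ∑' i, (c i) ^ s ≤ ∑' i, ε' * 2⁻¹ ^ (i+1) := by
                  refine ENNReal.tsum_le_tsum fun i => ?_
                  calc (c i) ^ s ≤ (c i) ^ (1:ℝ) := ENNReal.rpow_le_rpow_of_exponent_ge
                        (le_trans (min_le_right _ _) (min_le_left _ _)) hs
                    _ = c i := ENNReal.rpow_one _
                    _ ≤ ε' * 2⁻¹ ^ (i+1) := (min_le_right _ _).trans (min_le_right _ _)
              _ = ε' * ∑' i, 2⁻¹ ^ (i+1) := ENNReal.tsum_mul_left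
              _ ≤ ε' * 1 := by
                  gcongr
                  have : ∑' i:ℕ, (2:ℝ≥0∞)⁻¹ ^ (i+1) = 2⁻¹ * ∑' i:ℕ, 2⁻¹ ^ i := by
                    rw [← ENNReal.tsum_mul_left]
                    congr 1; ext i; ring
                  rw [this, ENNReal.tsum_geometric]
                  simp [ENNReal.one_sub_inv_two]
              _ = ε' := mul_one _
      _ = (2 * 2 ^ s) * ε' := by ring
      _ ≤ ε := by rw [hε'def, mul_comm (2:ℝ≥0∞) (2^s)]; exact ENNReal.mul_div_le

lemma gdelta_hull {X : Type*} [MetricSpace X] [MeasurableSpace X] [BorelSpace X] {s : ℝ}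
    (hs : 1 ≤ s) (A : Set X) (h : μH[s] A = 0) :
    ∃ U : ℕ → Set X, (∀ k, IsOpen (U k)) ∧ (∀ k, A ⊆ U k) ∧ μH[s] (⋂ k, U k) = 0 := by
  have hVs : ∀ k : ℕ, ∃ V : ℕ → Set X, (∀ i, IsOpen (V i)) ∧ A ⊆ ⋃ i, V i ∧
      (∀ i, EMetric.diam (V i) ≤ ENNReal.ofReal (1 / (k+1))) ∧
      ∑' i, EMetric.diam (V i) ^ s ≤ 2⁻¹ ^ k := fun k =>
    cover_open hs A h (ENNReal.pow_pos (ENNReal.inv_pos.mpr (by norm_num)) k) (by positivity)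
  choose V hVopen hVcov hVdiam hVsum using hVs
  refine ⟨fun k => ⋃ i, V k i, fun k => isOpen_iUnion (hVopen k), fun k => hVcov k, ?_⟩
  refine le_antisymm ?_ zero_le
  rw [MeasureTheory.Measure.hausdorffMeasure_apply]
  refine iSup₂_le fun r hr => ?_
  refine ENNReal.le_of_forall_pos_le_add fun ε hε _ => ?_
  rw [zero_add]
  -- choose K
  obtain ⟨k₁, hk₁⟩ := ENNReal.exists_inv_two_pow_lt (show (ε:ℝ≥0∞) ≠ 0 by exact_mod_cast hε.ne')
  obtain ⟨n, hn⟩ := ENNReal.exists_inv_nat_lt hr.ne'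
  set K := max k₁ n with hK
  have hdiam : ∀ i, EMetric.diam (V K i) ≤ r := by
    intro i
    refine (hVdiam K i).trans ?_
    have h1 : ENNReal.ofReal (1 / (K+1)) = (ENNReal.ofReal (K+1))⁻¹ := by
      rw [one_div, ENNReal.ofReal_inv_of_pos (by positivity)]
    rw [h1]
    have h2 : (n : ℝ≥0∞) ≤ ENNReal.ofReal ((K:ℝ)+1) := by
      rw [← ENNReal.ofReal_natCast n]
      refine ENNReal.ofReal_le_ofReal ?_
      have : (n:ℝ) ≤ (K:ℝ) := Nat.cast_le.2 (le_max_right k₁ n)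
      linarith
    exact le_trans (ENNReal.inv_le_inv.2 h2) (le_of_lt hn)
  have hsum : ∑' i, ⨆ _ : (V K i).Nonempty, EMetric.diam (V K i) ^ s ≤ (ε : ℝ≥0∞) := by
    refine le_trans (ENNReal.tsum_le_tsum fun i => ?_) ((hVsum K).trans ?_)
    · exact iSup_le fun _ => le_rfl
    · refine le_trans ?_ hk₁.le
      exact pow_le_pow_of_le_one zero_le (by simp) (le_max_left k₁ n)
  calc (⨅ (t : ℕ → Set X) (_ : (⋂ k, ⋃ i, V k i) ⊆ ⋃ n, t n)
        (_ : ∀ n, EMetric.diam (t n) ≤ r), ∑' n, ⨆ _ : (t n).Nonempty, EMetric.diam (t n) ^ s)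
      ≤ ∑' i, ⨆ _ : (V K i).Nonempty, EMetric.diam (V K i) ^ s := by
        exact iInf_le_of_le (V K) (iInf_le_of_le (iInter_subset _ K) (iInf_le_of_le hdiam le_rfl))
    _ ≤ ε := hsum

/-- Compactification: from a set containing segments in a direction set of positive outer
measure (directions parametrized by slopes, ambient space `ℝ × ℝⁿ ≅ ℝ^(n+1)`), one gets a
compact set of no larger Hausdorff dimension containing segments in a compact set of slopes of
positive measure, all of whose projections to the first axis have length at least some `c > 0`. -/
theorem stmt15 (n : ℕ) (B : Set (ℝ × EuclideanSpace ℝ (Fin n)))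
    (D : Set (EuclideanSpace ℝ (Fin n))) (hD : 0 < volume D)
    (hB : ∀ a ∈ D, ∃ (b : EuclideanSpace ℝ (Fin n)) (t₁ t₂ : ℝ), t₁ < t₂ ∧
      {p : ℝ × EuclideanSpace ℝ (Fin n) | ∃ t ∈ Set.Icc t₁ t₂, p = (t, t • a + b)} ⊆ B) :
    ∃ E : Set (ℝ × EuclideanSpace ℝ (Fin n)), IsCompact E ∧ dimH E ≤ dimH B ∧
      ∃ D' : Set (EuclideanSpace ℝ (Fin n)), IsCompact D' ∧ 0 < volume D' ∧
        ∃ c : ℝ, 0 < c ∧ ∀ a ∈ D', ∃ (b : EuclideanSpace ℝ (Fin n)) (t₁ t₂ : ℝ), c ≤ t₂ - t₁ ∧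
          {p : ℝ × EuclideanSpace ℝ (Fin n) | ∃ t ∈ Set.Icc t₁ t₂, p = (t, t • a + b)} ⊆ E := by
  classical
  -- countable decomposition of the direction set
  set piece : (ℚ × ℚ) × ℕ → Set (EuclideanSpace ℝ (Fin n)) := fun i =>
    {a | (i.1.1:ℝ) < (i.1.2:ℝ) ∧ a ∈ D ∧ ‖a‖ ≤ (i.2:ℝ) ∧ ∃ b : EuclideanSpace ℝ (Fin n), ‖b‖ ≤ (i.2:ℝ) ∧
      {p : ℝ × EuclideanSpace ℝ (Fin n) | ∃ t ∈ Set.Icc (i.1.1:ℝ) (i.1.2:ℝ), p = (t, t • a + b)} ⊆ B} with hpiece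
  have hcover : D ⊆ ⋃ i, piece i := by
    intro a ha
    obtain ⟨b, t₁, t₂, hlt, hsub⟩ := hB a ha
    obtain ⟨q₁, hq₁⟩ := exists_rat_btwn hlt
    obtain ⟨q₂, hq₂⟩ := exists_rat_btwn hq₁.2
    obtain ⟨m, hm⟩ := exists_nat_ge (max ‖a‖ ‖b‖)
    refine mem_iUnion.2 ⟨((q₁, q₂), m), hq₂.1, ha, le_trans (le_max_left _ _) hm, b,
      le_trans (le_max_right _ _) hm, ?_⟩
    rintro p ⟨t, ht, rfl⟩
    exact hsub ⟨t, ⟨le_trans hq₁.1.le ht.1, le_trans ht.2 hq₂.2.le⟩, rfl⟩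
  have hpos : ∃ i, 0 < volume (piece i) := by
    by_contra hcon
    push_neg at hcon
    simp only [le_zero_iff] at hcon
    exact absurd (measure_mono_null hcover (measure_iUnion_null hcon)) hD.ne'
  obtain ⟨⟨⟨q₁, q₂⟩, m⟩, hθ0⟩ := hpos
  set r₁ : ℝ := (q₁:ℝ) with hr₁
  set r₂ : ℝ := (q₂:ℝ) with hr₂
  set A₀ : Set (EuclideanSpace ℝ (Fin n)) := piece ((q₁,q₂), m) with hA₀def
  obtain ⟨a₀, ha₀⟩ := nonempty_of_measure_ne_zero hθ0.ne'
  have hq : r₁ < r₂ := ha₀.1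
  -- choice of translation b = f a
  set f : EuclideanSpace ℝ (Fin n) → EuclideanSpace ℝ (Fin n) := fun a =>
    if h : ∃ b : EuclideanSpace ℝ (Fin n), ‖b‖ ≤ (m:ℝ) ∧ {p : ℝ × EuclideanSpace ℝ (Fin n) | ∃ t ∈ Set.Icc r₁ r₂, p = (t, t • a + b)} ⊆ B
    then h.choose else 0 with hfdef
  have hfA₀ : ∀ a ∈ A₀, ‖f a‖ ≤ (m:ℝ) ∧
      {p : ℝ × EuclideanSpace ℝ (Fin n) | ∃ t ∈ Set.Icc r₁ r₂, p = (t, t • a + f a)} ⊆ B := by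
    intro a ha
    obtain ⟨-, -, -, hex⟩ := ha
    rw [hfdef]
    have hex' : ∃ b : EuclideanSpace ℝ (Fin n), ‖b‖ ≤ (m:ℝ) ∧ {p : ℝ × EuclideanSpace ℝ (Fin n) | ∃ t ∈ Set.Icc r₁ r₂, p = (t, t • a + b)} ⊆ B := hex
    simp only [dif_pos hex']
    exact hex'.choose_spec
  have hA₀D : ∀ a ∈ A₀, ‖a‖ ≤ (m:ℝ) := fun a ha => ha.2.2.1
  -- dimension of B is at least 1
  have hdim1 : (1:ℝ≥0∞) ≤ dimH B := by
    have hsub := (hfA₀ a₀ ha₀).2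
    have himg : (Prod.fst '' {p : ℝ × EuclideanSpace ℝ (Fin n) | ∃ t ∈ Set.Icc r₁ r₂, p = (t, t • a₀ + f a₀)})
        = Set.Icc r₁ r₂ := by
      ext x
      constructor
      · rintro ⟨p, ⟨t, ht, rfl⟩, rfl⟩; exact ht
      · intro hx; exact ⟨(x, x • a₀ + f a₀), ⟨x, hx, rfl⟩, rfl⟩
    have h1 : dimH (Set.Icc r₁ r₂ : Set ℝ) = 1 := by
      rw [Real.dimH_of_mem_nhds (Icc_mem_nhds (x := (r₁+r₂)/2) (by linarith) (by linarith))]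
      simp
    calc (1:ℝ≥0∞) = dimH (Set.Icc r₁ r₂ : Set ℝ) := h1.symm
      _ = dimH (Prod.fst '' {p : ℝ × EuclideanSpace ℝ (Fin n) | ∃ t ∈ Set.Icc r₁ r₂, p = (t, t • a₀ + f a₀)}) := by
          rw [himg]
      _ ≤ dimH {p : ℝ × EuclideanSpace ℝ (Fin n) | ∃ t ∈ Set.Icc r₁ r₂, p = (t, t • a₀ + f a₀)} :=
          LipschitzWith.dimH_image_le LipschitzWith.prod_fst _
      _ ≤ dimH B := dimH_mono hsub
  -- the open hull family W
  obtain ⟨W, hWopen, hWB, hWmono, hWdim⟩ : ∃ W : ℕ → Set (ℝ × EuclideanSpace ℝ (Fin n)), (∀ k, IsOpen (W k)) ∧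
      (∀ k, B ⊆ W k) ∧ (∀ j k, j ≤ k → W k ⊆ W j) ∧ dimH (⋂ k, W k) ≤ dimH B := by
    by_cases hd : dimH B = ⊤
    · exact ⟨fun _ => univ, fun _ => isOpen_univ, fun _ => subset_univ _,
        fun _ _ _ => subset_rfl, by rw [hd]; exact le_top⟩
    · set d : ℝ≥0 := (dimH B).toNNReal with hddef
      have hdd : dimH B = (d : ℝ≥0∞) := (ENNReal.coe_toNNReal hd).symm
      have hd1 : (1:ℝ≥0) ≤ d := by
        rw [hdd] at hdim1; exact_mod_cast hdim1
      set ds : ℕ → ℝ≥0 := fun j => d + ((j:ℝ≥0)+1)⁻¹ with hdsdef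
      have hds1 : ∀ j, (1:ℝ) ≤ ((ds j : ℝ≥0) : ℝ) := by
        intro j
        have : (1:ℝ≥0) ≤ ds j := le_trans hd1 (le_add_of_nonneg_right zero_le)
        exact_mod_cast this
      have hmu : ∀ j, μH[((ds j : ℝ≥0) : ℝ)] B = 0 := by
        intro j
        refine hausdorffMeasure_of_dimH_lt ?_
        rw [hdd]
        exact_mod_cast lt_add_of_pos_right d (by positivity)
      choose U hUopen hUB hUzero using fun j => gdelta_hull (hds1 j) B (hmu j)
      refine ⟨fun k => ⋂ (p : Fin (k+1) × Fin (k+1)), U p.1 p.2, ?_, ?_, ?_, ?_⟩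
      · intro k
        exact isOpen_iInter_of_finite fun p => hUopen p.1 p.2
      · intro k
        exact subset_iInter fun p => hUB p.1 p.2
      · intro j k hjk x hx
        simp only [mem_iInter] at hx ⊢
        exact fun p => hx (⟨p.1.1, by omega⟩, ⟨p.2.1, by omega⟩)
      · have key : ∀ j, (⋂ k, ⋂ (p : Fin (k+1) × Fin (k+1)), U p.1 p.2) ⊆
            ⋂ i, U j i := by
          intro j x hx
          simp only [mem_iInter] at hx ⊢
          intro i
          have := hx (max j i) (⟨j, by omega⟩, ⟨i, by omega⟩)
          simpa using this
        have hle : ∀ j, dimH (⋂ k, ⋂ (p : Fin (k+1) × Fin (k+1)), U p.1 p.2)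
            ≤ ((ds j : ℝ≥0) : ℝ≥0∞) := by
          intro j
          refine dimH_le_of_hausdorffMeasure_ne_top ?_
          rw [measure_mono_null (key j) (hUzero j)]
          exact ENNReal.zero_ne_top
        by_contra hlt
        push_neg at hlt
        rw [hdd] at hlt
        obtain ⟨r, hr1, hr2⟩ := ENNReal.lt_iff_exists_nnreal_btwn.1 hlt
        have hdr : (d:ℝ) < (r:ℝ) := by exact_mod_cast hr1
        obtain ⟨j, hj⟩ := exists_nat_one_div_lt (sub_pos.2 hdr)
        have hdsr : ds j ≤ r := by
          have h1 : ((ds j : ℝ≥0):ℝ) = (d:ℝ) + ((j:ℝ)+1)⁻¹ := by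
            push_cast [hdsdef]; ring
          have h2 : ((j:ℝ)+1)⁻¹ < (r:ℝ) - (d:ℝ) := by
            rw [← one_div]; exact hj
          have : ((ds j : ℝ≥0):ℝ) ≤ (r:ℝ) := by rw [h1]; linarith
          exact_mod_cast this
        exact absurd ((hle j).trans (by exact_mod_cast hdsr)) (not_le.2 hr2)
  -- uniform margin sets
  set C : ℕ → ℕ → Set (EuclideanSpace ℝ (Fin n)) := fun k j =>
    {a | ∀ p : ℝ × EuclideanSpace ℝ (Fin n),
      (∃ s ∈ Set.Icc r₁ r₂, dist p (s, s • a + f a) ≤ 1/((j:ℝ)+1)) → p ∈ W k} with hCdef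
  have hCmono : ∀ k, Monotone (C k) := by
    intro k j j' hjj a ha p hp
    obtain ⟨s, hs, hd⟩ := hp
    refine ha p ⟨s, hs, hd.trans ?_⟩
    apply one_div_le_one_div_of_le
    · positivity
    · have : (j:ℝ) ≤ (j':ℝ) := Nat.cast_le.2 hjj
      linarith
  have hCex : ∀ k, ∀ a ∈ A₀, ∃ j, a ∈ C k j := by
    intro k a ha
    have hcomp : IsCompact ((fun t : ℝ =>
        ((t, t • a + f a) : ℝ × EuclideanSpace ℝ (Fin n))) '' Set.Icc r₁ r₂) :=
      (isCompact_Icc).image (by fun_prop)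
    have hsub : ((fun t : ℝ =>
        ((t, t • a + f a) : ℝ × EuclideanSpace ℝ (Fin n))) '' Set.Icc r₁ r₂) ⊆ W k := by
      rintro p ⟨t, ht, rfl⟩
      exact hWB k ((hfA₀ a ha).2 ⟨t, ht, rfl⟩)
    obtain ⟨δ, hδ0, hδ⟩ := hcomp.exists_thickening_subset_open (hWopen k) hsub
    obtain ⟨j, hj⟩ := exists_nat_one_div_lt hδ0
    refine ⟨j, fun p hp => ?_⟩
    obtain ⟨s, hs, hd⟩ := hp
    exact hδ (Metric.mem_thickening_iff.2
      ⟨(s, s • a + f a), ⟨s, hs, rfl⟩, lt_of_le_of_lt hd hj⟩)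
  -- the measure of the base piece
  set θ := volume A₀ with hθdef
  have hθ0' : θ ≠ 0 := hθ0.ne'
  have hθtop : θ ≠ ⊤ := by
    refine ne_of_lt (lt_of_le_of_lt (measure_mono (fun a ha =>
      mem_closedBall_zero_iff.2 (hA₀D a ha))) measure_closedBall_lt_top)
  set lb : ℕ → ℝ≥0∞ := fun k => θ * (2⁻¹ + 2⁻¹ ^ (k+1)) with hlbdef
  have hhalf : (2:ℝ≥0∞)⁻¹ + 2⁻¹ = 1 := by
    rw [← two_mul, ENNReal.mul_inv_cancel] <;> norm_num
  have hlb0 : lb 0 = θ := by rw [hlbdef]; norm_num [hhalf]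
  have hstep : ∀ k (S : Set (EuclideanSpace ℝ (Fin n))), S ⊆ A₀ → lb k ≤ volume S →
      ∃ j, lb (k+1) ≤ volume (S ∩ C k j) := by
    intro k S hSA hSv
    have hun : S = ⋃ j, S ∩ C k j := by
      ext a
      simp only [mem_iUnion, mem_inter_iff]
      constructor
      · intro ha; obtain ⟨j, hj⟩ := hCex k a (hSA ha); exact ⟨j, ha, hj⟩
      · rintro ⟨j, hj, -⟩; exact hj
    have hmono : Monotone (fun j => S ∩ C k j) :=
      fun j j' h => inter_subset_inter_right _ (hCmono k h)
    have hsup : volume S = ⨆ j, volume (S ∩ C k j) := by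
      conv_lhs => rw [hun]
      exact hmono.measure_iUnion
    have hlt : lb (k+1) < volume S := by
      refine lt_of_lt_of_le ?_ hSv
      rw [hlbdef]
      refine (ENNReal.mul_lt_mul_iff_right hθ0' hθtop).2 ?_
      refine ENNReal.add_lt_add_left (by norm_num) ?_
      rw [pow_succ]
      calc (2:ℝ≥0∞)⁻¹^(k+1) * 2⁻¹ < 2⁻¹^(k+1) * 1 := by
            rw [ENNReal.mul_lt_mul_iff_right (pow_ne_zero _ (by norm_num))
              (ENNReal.pow_ne_top (by norm_num))]
            rw [ENNReal.inv_lt_one]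
            norm_num
        _ = _ := mul_one _
    rw [hsup] at hlt
    obtain ⟨j, hj⟩ := lt_iSup_iff.1 hlt
    exact ⟨j, hj.le⟩
  -- recursive construction of the nested pieces
  set F : (k : ℕ) → {S : Set (EuclideanSpace ℝ (Fin n)) // S ⊆ A₀ ∧ lb k ≤ volume S} := fun k =>
    Nat.rec ⟨A₀, subset_rfl, le_of_eq hlb0⟩
      (fun k ih => ⟨ih.1 ∩ C k (hstep k ih.1 ih.2.1 ih.2.2).choose,
        inter_subset_left.trans ih.2.1, (hstep k ih.1 ih.2.1 ih.2.2).choose_spec⟩) k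
    with hFdef
  set A : ℕ → Set (EuclideanSpace ℝ (Fin n)) := fun k => (F k).1 with hAdef
  have hAsucc : ∀ k, A (k+1) = A k ∩ C k (hstep k (A k) (F k).2.1 (F k).2.2).choose :=
    fun k => rfl
  have hAsub : ∀ k, A (k+1) ⊆ A k := fun k => by rw [hAsucc]; exact inter_subset_left
  have hAA₀ : ∀ k, A k ⊆ A₀ := fun k => (F k).2.1
  have hAlb : ∀ k, lb k ≤ volume (A k) := fun k => (F k).2.2
  have hAC : ∀ k, ∃ j, A (k+1) ⊆ C k j :=
    fun k => ⟨_, by rw [hAsucc]; exact inter_subset_right⟩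
  have hAmono : ∀ {j k : ℕ}, j ≤ k → A k ⊆ A j := by
    intro j k h
    induction h with
    | refl => exact subset_rfl
    | step _ ih => exact (hAsub _).trans ih
  -- segment unions and the compact set E
  set seg : EuclideanSpace ℝ (Fin n) → Set (ℝ × EuclideanSpace ℝ (Fin n)) := fun a =>
    (fun t : ℝ => ((t, t • a + f a) : ℝ × EuclideanSpace ℝ (Fin n))) '' Set.Icc r₁ r₂
    with hsegdef
  set S : ℕ → Set (ℝ × EuclideanSpace ℝ (Fin n)) := fun k => ⋃ a ∈ A k, seg a with hSdef
  set R : ℝ := max (max |r₁| |r₂|) ((max |r₁| |r₂|) * m + m) with hRdef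
  have habs : ∀ t ∈ Set.Icc r₁ r₂, |t| ≤ max |r₁| |r₂| := by
    intro t ht
    have h1 : -(max |r₁| |r₂|) ≤ t := by
      have h2 := neg_abs_le r₁; have h3 := le_max_left |r₁| |r₂|; linarith [ht.1]
    have h2 : t ≤ max |r₁| |r₂| := by
      have h2 := le_abs_self r₂; have h3 := le_max_right |r₁| |r₂|; linarith [ht.2]
    exact abs_le.2 ⟨h1, h2⟩
  have hSbound : ∀ k, S k ⊆ Metric.closedBall 0 R := by
    intro k p hp
    simp only [hSdef, mem_iUnion] at hp
    obtain ⟨a, ha, t, ht, rfl⟩ := hp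
    rw [mem_closedBall_zero_iff]
    have ham := hA₀D a (hAA₀ k ha)
    have hbm := (hfA₀ a (hAA₀ k ha)).1
    have htb := habs t ht
    rw [Prod.norm_def]
    refine max_le (le_trans ?_ (le_max_left _ _)) (le_trans ?_ (le_max_right _ _))
    · simpa [Real.norm_eq_abs] using htb
    · calc ‖t • a + f a‖ ≤ ‖t • a‖ + ‖f a‖ := norm_add_le _ _
        _ ≤ max |r₁| |r₂| * m + m := by
            rw [norm_smul, Real.norm_eq_abs]
            exact add_le_add (mul_le_mul htb ham (norm_nonneg _)
              (le_trans (abs_nonneg r₁) (le_max_left _ _))) hbm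
  set E : Set (ℝ × EuclideanSpace ℝ (Fin n)) := ⋂ k, closure (S k) with hEdef
  have hEcomp : IsCompact E := by
    refine IsCompact.of_isClosed_subset (isCompact_closedBall 0 R)
      (isClosed_iInter fun k => isClosed_closure) ?_
    exact (iInter_subset _ 0).trans (closure_minimal (hSbound 0) Metric.isClosed_closedBall)
  have hEW : ∀ j, E ⊆ W j := by
    intro j p hp
    obtain ⟨i, hAi⟩ := hAC j
    have hpc : p ∈ closure (S (j+1)) := mem_iInter.1 hp (j+1)
    obtain ⟨q, hqS, hdq⟩ := Metric.mem_closure_iff.1 hpc (1/((i:ℝ)+1)) (by positivity)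
    simp only [hSdef, mem_iUnion] at hqS
    obtain ⟨a, haA, t, ht, rfl⟩ := hqS
    exact hAi haA p ⟨t, ht, hdq.le⟩
  have hEdim : dimH E ≤ dimH B := by
    refine le_trans (dimH_mono ?_) hWdim
    exact fun p hp => mem_iInter.2 fun k => hEW k hp
  set D' : Set (EuclideanSpace ℝ (Fin n)) := ⋂ k, closure (A k) with hD'def
  have hD'comp : IsCompact D' := by
    refine IsCompact.of_isClosed_subset (isCompact_closedBall 0 m)
      (isClosed_iInter fun k => isClosed_closure) ?_
    refine (iInter_subset _ 0).trans (closure_minimal ?_ Metric.isClosed_closedBall)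
    exact fun a ha => mem_closedBall_zero_iff.2 (hA₀D a (hAA₀ 0 ha))
  have hD'vol : 0 < volume D' := by
    have hmeas : ∀ k, NullMeasurableSet (closure (A k)) volume :=
      fun k => isClosed_closure.measurableSet.nullMeasurableSet
    have hanti : Antitone fun k => closure (A k) :=
      fun j k h => closure_mono (hAmono h)
    have hfin : ∃ k, volume (closure (A k)) ≠ ⊤ := ⟨0, by
      exact ne_of_lt (lt_of_le_of_lt (measure_mono (closure_minimal (fun a ha =>
        mem_closedBall_zero_iff.2 (hA₀D a (hAA₀ 0 ha))) Metric.isClosed_closedBall))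
        measure_closedBall_lt_top)⟩
    rw [hD'def, hanti.measure_iInter hmeas hfin]
    refine lt_of_lt_of_le (b := θ * 2⁻¹) ?_ (le_iInf fun k => ?_)
    · exact ENNReal.mul_pos hθ0' (ENNReal.inv_ne_zero.2 (by norm_num))
    · refine le_trans ?_ (le_trans (hAlb k) (measure_mono subset_closure))
      rw [hlbdef]
      exact mul_le_mul_right le_self_add _
  refine ⟨E, hEcomp, hEdim, D', hD'comp, hD'vol, r₂ - r₁, by linarith, ?_⟩
  intro a haD'
  have hx : ∀ k : ℕ, ∃ x, x ∈ A (k+1) ∧ dist a x < 1/((k:ℝ)+1) := by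
    intro k
    have hac : a ∈ closure (A (k+1)) := mem_iInter.1 haD' (k+1)
    obtain ⟨x, hx1, hx2⟩ := Metric.mem_closure_iff.1 hac _
      (by positivity : (0:ℝ) < 1/((k:ℝ)+1))
    exact ⟨x, hx1, hx2⟩
  choose x hxA hxd using hx
  have hxa : Filter.Tendsto x atTop (𝓝 a) := by
    rw [tendsto_iff_dist_tendsto_zero]
    refine squeeze_zero (fun k => dist_nonneg) (fun k => ?_)
      tendsto_one_div_add_atTop_nhds_zero_nat
    rw [dist_comm]; exact (hxd k).le
  have hybd : ∀ k, f (x k) ∈ Metric.closedBall (0 : EuclideanSpace ℝ (Fin n)) m :=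
    fun k => mem_closedBall_zero_iff.2 (hfA₀ _ (hAA₀ _ (hxA k))).1
  obtain ⟨b, hbmem, φ, hφ, hyb⟩ :=
    tendsto_subseq_of_bounded Metric.isBounded_closedBall hybd
  refine ⟨b, r₁, r₂, le_refl _, ?_⟩
  rintro p ⟨t, ht, rfl⟩
  refine mem_iInter.2 fun K => ?_
  have hconv : Filter.Tendsto (fun i => ((t, t • x (φ i) + f (x (φ i))) :
      ℝ × EuclideanSpace ℝ (Fin n))) atTop (𝓝 (t, t • a + b)) := by
    refine Filter.Tendsto.prodMk_nhds tendsto_const_nhds ?_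
    exact ((hxa.comp hφ.tendsto_atTop).const_smul t).add hyb
  refine mem_closure_of_tendsto hconv ?_
  filter_upwards [Filter.eventually_ge_atTop K] with i hi
  have hmem : x (φ i) ∈ A K := by
    have h2 : i ≤ φ i := hφ.le_apply
    exact hAmono (show K ≤ φ i + 1 by omega) (hxA (φ i))
  exact mem_iUnion₂.2 ⟨x (φ i), hmem, ⟨t, ht, rfl⟩⟩
end
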